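/- arXiv:1409.2409 — 6 statements merged into one kernel-verified Lean document; each statement's English description precedes it below -/
import Mathlib

section
/- Let H be a Hilbert space decomposed as H = H₊ ⊕ H₋, and let H̃ be a bounded self-adjoint operator with block form H̃ = [[H₊₊, T],[T*, H₋₋]] satisfying H₊₊ ≥ αI on H₊ and H₋₋ ≤ -αI on H₋ for some α ∈ (0,1]. Then H̃ is boundedly invertible. -/
noncomputable section

/-- Let `H` be a complex Hilbert space decomposed as `H = H₊ ⊕ H₋` by a
self-adjoint involution `J` (orthogonal projections `P = (1+J)/2` and `P⊥ = 1 - P`), and let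
`Ht` be a bounded self-adjoint operator satisfying `P Ht P ≥ α P` and `P⊥ Ht P⊥ ≤ -α P⊥`
for some `α ∈ (0,1]`.  Then `Ht` is boundedly invertible. -/
theorem stmt0 {H : Type*} [NormedAddCommGroup H] [InnerProductSpace ℂ H] [CompleteSpace H]
    (Ht J : H →L[ℂ] H) (hHt : IsSelfAdjoint Ht) (hJ : IsSelfAdjoint J) (hJ2 : J * J = 1)
    (P : H →L[ℂ] H) (hP : P = (2⁻¹ : ℂ) • (1 + J))
    (α : ℝ) (hα : α ∈ Set.Ioc (0 : ℝ) 1)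
    (hpos : ∀ x : H, α * ‖P x‖ ^ 2 ≤ (inner ℂ (P x) (Ht (P x)) : ℂ).re)
    (hneg : ∀ x : H, (inner ℂ ((1 - P) x) (Ht ((1 - P) x)) : ℂ).re ≤ -α * ‖(1 - P) x‖ ^ 2) :
    ∃ G : H →L[ℂ] H, G * Ht = 1 ∧ Ht * G = 1 := by
  obtain ⟨hα0, hα1⟩ := hα
  -- P is self-adjoint and idempotent
  have hPsa : IsSelfAdjoint P := by
    rw [hP]
    have h1 : IsSelfAdjoint ((2⁻¹ : ℂ)) := by
      rw [IsSelfAdjoint]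
      simp
    exact h1.smul ((IsSelfAdjoint.one _).add hJ)
  have hP2 : P * P = P := by
    have h1 : (1 + J) * (1 + J) = (2 : ℂ) • (1 + J) := by
      rw [mul_add, add_mul, add_mul, hJ2]
      simp only [one_mul, mul_one, smul_add, two_smul]
      abel
    rw [hP, smul_mul_smul_comm, h1, smul_smul]
    norm_num
  -- J = 2 P - 1
  have hJP : ∀ x : H, J x = P x - (1 - P) x := by
    intro x
    have h : J = (2 : ℂ) • P - 1 := by
      rw [hP, smul_smul]
      norm_num
    rw [h]
    simp [two_smul]
    abel
  -- self-adjointness at the level of inner products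
  have hsa : ∀ a b : H, (inner ℂ (Ht a) b : ℂ) = inner ℂ a (Ht b) := by
    intro a b
    rw [← hHt.adjoint_eq, ContinuousLinearMap.adjoint_inner_left, hHt.adjoint_eq]
  have hJsa : ∀ a b : H, (inner ℂ (J a) b : ℂ) = inner ℂ a (J b) := by
    intro a b
    rw [← hJ.adjoint_eq, ContinuousLinearMap.adjoint_inner_left, hJ.adjoint_eq]
  have hPsa' : ∀ a b : H, (inner ℂ (P a) b : ℂ) = inner ℂ a (P b) := by
    intro a b
    rw [← hPsa.adjoint_eq, ContinuousLinearMap.adjoint_inner_left, hPsa.adjoint_eq]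
  -- J is an isometry
  have hJiso : ∀ x : H, ‖J x‖ = ‖x‖ := by
    intro x
    have h1 : (inner ℂ (J x) (J x) : ℂ) = inner ℂ x x := by
      rw [hJsa]
      have h2 : J (J x) = (J * J) x := rfl
      rw [h2, hJ2]
      rfl
    rw [inner_self_eq_norm_sq_to_K, inner_self_eq_norm_sq_to_K] at h1
    have h2 : ‖J x‖ ^ 2 = ‖x‖ ^ 2 := by exact_mod_cast h1
    exact (sq_eq_sq₀ (norm_nonneg _) (norm_nonneg _)).mp h2
  -- orthogonality of P x and (1-P) x, Pythagoras
  have horth : ∀ x : H, (inner ℂ (P x) ((1 - P) x) : ℂ) = 0 := by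
    intro x
    have h0 : P ((1 - P) x) = 0 := by
      have h : P ((1 - P) x) = (P * (1 - P)) x := rfl
      rw [h, mul_sub, mul_one, hP2, sub_self]
      rfl
    rw [hPsa', h0, inner_zero_right]
  have hpyth : ∀ x : H, ‖x‖ ^ 2 = ‖P x‖ ^ 2 + ‖(1 - P) x‖ ^ 2 := by
    intro x
    have hx : x = P x + (1 - P) x := by simp
    have h := norm_add_sq (𝕜 := ℂ) (P x) ((1 - P) x)
    rw [horth x] at h
    simp only [map_zero, mul_zero, add_zero] at h
    rw [← hx] at h
    linarith
  -- the key coercivity estimate : α ‖x‖² ≤ Re ⟨J x, Ht x⟩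
  have hkey : ∀ x : H, α * ‖x‖ ^ 2 ≤ (inner ℂ (J x) (Ht x) : ℂ).re := by
    intro x
    have hx : x = P x + (1 - P) x := by simp
    have hcross : (inner ℂ ((1 - P) x) (Ht (P x)) : ℂ).re
        = (inner ℂ (P x) (Ht ((1 - P) x)) : ℂ).re := by
      have h1 : (inner ℂ ((1 - P) x) (Ht (P x)) : ℂ)
          = (starRingEnd ℂ) (inner ℂ (P x) (Ht ((1 - P) x))) := by
        rw [← hsa, ← inner_conj_symm]
      rw [h1, Complex.conj_re]
    have hHx : Ht x = Ht (P x) + Ht ((1 - P) x) := by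
      conv_lhs => rw [hx]
      rw [map_add]
    have hexp : (inner ℂ (J x) (Ht x) : ℂ).re
        = (inner ℂ (P x) (Ht (P x)) : ℂ).re
          - (inner ℂ ((1 - P) x) (Ht ((1 - P) x)) : ℂ).re := by
      rw [hJP x, hHx, inner_sub_left, inner_add_right, inner_add_right]
      simp only [Complex.sub_re, Complex.add_re]
      rw [hcross]
      ring
    have h1 := hpos x
    have h2 := hneg x
    have h3 := hpyth x
    rw [hexp]
    nlinarith
  -- lower bound on ‖Ht x‖
  have hlow : ∀ x : H, α * ‖x‖ ≤ ‖Ht x‖ := by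
    intro x
    rcases eq_or_ne x 0 with rfl | hx
    · simp
    · have h1 : α * ‖x‖ ^ 2 ≤ ‖x‖ * ‖Ht x‖ := by
        calc α * ‖x‖ ^ 2 ≤ (inner ℂ (J x) (Ht x) : ℂ).re := hkey x
          _ ≤ ‖(inner ℂ (J x) (Ht x) : ℂ)‖ := Complex.re_le_norm _
          _ ≤ ‖J x‖ * ‖Ht x‖ := norm_inner_le_norm _ _
          _ = ‖x‖ * ‖Ht x‖ := by rw [hJiso]
      have hxpos : (0 : ℝ) < ‖x‖ := norm_pos_iff.mpr hx
      nlinarith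
  have hker : LinearMap.ker (Ht : H →ₗ[ℂ] H) = ⊥ := by
    rw [LinearMap.ker_eq_bot']
    intro x hx
    have h := hlow x
    rw [show Ht x = 0 from hx] at h
    simp only [norm_zero] at h
    have h2 : ‖x‖ ≤ 0 := by nlinarith
    simpa using le_antisymm h2 (norm_nonneg x)
  -- range is closed
  have hanti : AntilipschitzWith (⟨α, hα0.le⟩ : NNReal)⁻¹ Ht := by
    refine AddMonoidHomClass.antilipschitz_of_bound Ht ?_
    intro x
    have h := hlow x
    change ‖x‖ ≤ α⁻¹ * ‖Ht x‖
    calc ‖x‖ = α⁻¹ * (α * ‖x‖) := by field_simp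
      _ ≤ α⁻¹ * ‖Ht x‖ := by
          exact mul_le_mul_of_nonneg_left h (by positivity)
  have hclosed : IsClosed (Set.range Ht) :=
    hanti.isClosed_range Ht.uniformContinuous
  have hclosed' : IsClosed ((LinearMap.range (Ht : H →ₗ[ℂ] H) : Submodule ℂ H) : Set H) := by
    have h : ((LinearMap.range (Ht : H →ₗ[ℂ] H) : Submodule ℂ H) : Set H) = Set.range Ht := by
      ext y; simp [LinearMap.mem_range]
    rw [h]; exact hclosed
  haveI : CompleteSpace (LinearMap.range (Ht : H →ₗ[ℂ] H) : Submodule ℂ H) :=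
    hclosed'.completeSpace_coe
  -- range is all of H
  have hrange : LinearMap.range (Ht : H →ₗ[ℂ] H) = ⊤ := by
    rw [← Submodule.orthogonal_eq_bot_iff]
    rw [Submodule.eq_bot_iff]
    intro y hy
    have hy' : ∀ x : H, (inner ℂ (Ht x) y : ℂ) = 0 := by
      intro x
      exact hy (Ht x) (LinearMap.mem_range_self _ x)
    have hHty : Ht y = 0 := by
      have h0 : (inner ℂ (Ht y) (Ht y) : ℂ) = 0 :=
        ((hsa (Ht y) y).symm).trans (hy' (Ht y))
      rwa [inner_self_eq_zero] at h0
    have h := hlow y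
    rw [hHty] at h
    simp only [norm_zero] at h
    have h2 : ‖y‖ ≤ 0 := by nlinarith
    simpa using le_antisymm h2 (norm_nonneg y)
  -- conclude
  let e := ContinuousLinearEquiv.ofBijective Ht hker hrange
  have he : ∀ y, e y = Ht y := fun y => by
    simp [e, ContinuousLinearEquiv.coeFn_ofBijective]
  refine ⟨e.symm.toContinuousLinearMap, ?_, ?_⟩
  · ext x
    simp only [ContinuousLinearMap.mul_apply, ContinuousLinearMap.one_apply,
      ContinuousLinearEquiv.coe_coe, ← he]
    exact e.symm_apply_apply x
  · ext x
    simp only [ContinuousLinearMap.mul_apply, ContinuousLinearMap.one_apply,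
      ContinuousLinearEquiv.coe_coe]
    rw [← he]
    exact e.apply_symm_apply x
end
end

section
/- For the 2×2 matrices A = diag(2, 1/2) and H = [[0,1],[1,0]], there is no self-adjoint involution J ≠ ±I commuting with A such that P H P ≥ α P and P⊥ H P⊥ ≤ -α P⊥ for some α > 0, where P = (I+J)/2. -/
noncomputable section

open scoped ComplexOrder

/-- For `A = diag(2, 1/2)` and `Hm = [[0,1],[1,0]]` (as self-adjoint operators
on `ℂ²`), there is no self-adjoint involution `J ≠ ±1` commuting with `A` such that, with
`P = (1+J)/2` and `P⊥ = 1 - P`, one has `P Hm P ≥ α P` and `P⊥ Hm P⊥ ≤ -α P⊥` for some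
`α > 0` (the inequalities being positive-semidefiniteness of the differences). -/
theorem stmt4 :
    ¬ ∃ (J : Matrix (Fin 2) (Fin 2) ℂ) (α : ℝ), 0 < α ∧
      J.IsHermitian ∧ J * J = 1 ∧ J ≠ 1 ∧ J ≠ -1 ∧
      !![(2 : ℂ), 0; 0, 2⁻¹] * J = J * !![(2 : ℂ), 0; 0, 2⁻¹] ∧
      Matrix.PosSemidef
        (((2⁻¹ : ℂ) • (1 + J)) * !![(0 : ℂ), 1; 1, 0] * ((2⁻¹ : ℂ) • (1 + J))
          - (α : ℂ) • ((2⁻¹ : ℂ) • (1 + J))) ∧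
      Matrix.PosSemidef
        (-((1 - (2⁻¹ : ℂ) • (1 + J)) * !![(0 : ℂ), 1; 1, 0] * (1 - (2⁻¹ : ℂ) • (1 + J)))
          - (α : ℂ) • (1 - (2⁻¹ : ℂ) • (1 + J))) := by
  rintro ⟨J, α, hα, hH, hJ2, hJ1, hJm1, hcomm, hP1, hP2⟩
  have h01 : J 0 1 = 0 := by
    have h := congrFun (congrFun hcomm 0) 1
    simp [Matrix.mul_apply, Fin.sum_univ_two] at h
    have h2 : J 0 1 * (2 - 2⁻¹) = 0 := by linear_combination h
    rcases mul_eq_zero.mp h2 with h | h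
    · exact h
    · norm_num at h
  have h10 : J 1 0 = 0 := by
    have h := congrFun (congrFun hcomm 1) 0
    simp [Matrix.mul_apply, Fin.sum_univ_two] at h
    have h2 : J 1 0 * (2 - 2⁻¹) = 0 := by linear_combination -h
    rcases mul_eq_zero.mp h2 with h | h
    · exact h
    · norm_num at h
  have h00 : J 0 0 * J 0 0 = 1 := by
    have h := congrFun (congrFun hJ2 0) 0
    simpa [Matrix.mul_apply, Fin.sum_univ_two, Matrix.one_apply, h01, h10] using h
  have h11 : J 1 1 * J 1 1 = 1 := by
    have h := congrFun (congrFun hJ2 1) 1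
    simpa [Matrix.mul_apply, Fin.sum_univ_two, Matrix.one_apply, h01, h10] using h
  have h00' : J 0 0 = 1 ∨ J 0 0 = -1 := by
    have h2 : (J 0 0 - 1) * (J 0 0 + 1) = 0 := by linear_combination h00
    rcases mul_eq_zero.mp h2 with h | h
    · exact Or.inl (by linear_combination h)
    · exact Or.inr (by linear_combination h)
  have h11' : J 1 1 = 1 ∨ J 1 1 = -1 := by
    have h2 : (J 1 1 - 1) * (J 1 1 + 1) = 0 := by linear_combination h11
    rcases mul_eq_zero.mp h2 with h | h
    · exact Or.inl (by linear_combination h)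
    · exact Or.inr (by linear_combination h)
  have key : ∀ i : Fin 2, J i i = 1 →
      ¬ (0 : ℂ) ≤ dotProduct (star (Pi.single i 1 : Fin 2 → ℂ))
        ((((2⁻¹ : ℂ) • (1 + J)) * !![(0 : ℂ), 1; 1, 0] * ((2⁻¹ : ℂ) • (1 + J))
          - (α : ℂ) • ((2⁻¹ : ℂ) • (1 + J))).mulVec (Pi.single i 1 : Fin 2 → ℂ)) := by
    intro i hi hle
    fin_cases i <;>
    · simp only [] at hi
      simp only [dotProduct, Matrix.mulVec, Fin.sum_univ_two, Matrix.sub_apply,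
        Matrix.smul_apply, Matrix.mul_apply, Matrix.add_apply, Matrix.one_apply,
        Pi.single, Function.update] at hle
      simp [h01, h10, hi, Matrix.cons_val_zero, Matrix.cons_val_one] at hle
      rw [Complex.le_def] at hle
      simp at hle
      have hre : α * (2⁻¹ * (1 + (1:ℂ).re)) ≤ 0 := by rw [← hi]; exact hle.1
      simp at hre
      linarith
  rcases h00' with ha | ha <;> rcases h11' with hb | hb
  · exact hJ1 (by ext i j; fin_cases i <;> fin_cases j <;>
      simp [Matrix.one_apply, h01, h10, ha, hb])
  · exact key 0 ha (hP1.dotProduct_mulVec_nonneg _)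
  · exact key 1 hb (hP1.dotProduct_mulVec_nonneg _)
  · exact hJm1 (by ext i j; fin_cases i <;> fin_cases j <;>
      simp [Matrix.one_apply, h01, h10, ha, hb])
end
end

section
/- Let B be a self-adjoint operator and J_A a bounded self-adjoint involution such that B + J_A is boundedly invertible. Then dom(|B|^{1/2}) = dom(|B + J_A|^{1/2}). -/
noncomputable section

open scoped ComplexOrder

variable {H : Type*} [NormedAddCommGroup H] [InnerProductSpace ℂ H] [CompleteSpace H]

/-- A (possibly unbounded) partially defined operator `T` is *symmetric*. -/
def PMapSymm (T : H →ₗ.[ℂ] H) : Prop :=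
  ∀ x y : T.domain, (inner ℂ (T x) (y : H) : ℂ) = inner ℂ (x : H) (T y)

/-- A partially defined operator `T` is *self-adjoint*: it is symmetric and the domain of its
adjoint is contained in its domain (`y ∈ dom T*` iff `∃ z, ∀ x ∈ dom T, ⟪T x, y⟫ = ⟪x, z⟫`). -/
def PMapSelfAdj (T : H →ₗ.[ℂ] H) : Prop :=
  PMapSymm T ∧
    ∀ y z : H, (∀ x : T.domain, (inner ℂ (T x) y : ℂ) = inner ℂ (x : H) z) → y ∈ T.domain

/-- A partially defined operator `T` is *non-negative*. -/
def PMapNonneg (T : H →ₗ.[ℂ] H) : Prop :=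
  ∀ x : T.domain, 0 ≤ (inner ℂ (x : H) (T x) : ℂ).re

/-- `T = R ∘ S` as partially defined operators, where `dom (R ∘ S) = {x ∈ dom S | S x ∈ dom R}`. -/
def PMapCompEq (R S T : H →ₗ.[ℂ] H) : Prop :=
  (∀ x : T.domain, ∃ (hx : (x : H) ∈ S.domain) (hSx : S ⟨x, hx⟩ ∈ R.domain),
    T x = R ⟨S ⟨x, hx⟩, hSx⟩) ∧
  ∀ x : S.domain, S x ∈ R.domain → (x : H) ∈ T.domain

/-- `R` is *the* (unique) non-negative self-adjoint square root of `T`, i.e. `R` is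
non-negative, self-adjoint and `R ∘ R = T`. -/
def PMapIsSqrt (R T : H →ₗ.[ℂ] H) : Prop :=
  PMapSelfAdj R ∧ PMapNonneg R ∧ PMapCompEq R R T


open Filter Topology

local notation "⟪" x ", " y "⟫" => (inner ℂ x y : ℂ)

lemma re_le_norm' (z : ℂ) : z.re ≤ ‖z‖ := by
  exact Complex.re_le_norm z

lemma inner_self_ofReal (x : H) : (inner ℂ x x : ℂ) = ((‖x‖ ^ 2 : ℝ) : ℂ) := by
  rw [inner_self_eq_norm_sq_to_K]
  norm_cast

/-- Generalized Cauchy-Schwarz for a nonnegative hermitian form given by a linear map. -/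
lemma herm_cs (f : H →ₗ[ℂ] H) (hsa : ∀ a b : H, ⟪f a, b⟫ = ⟪a, f b⟫)
    (h0 : ∀ a : H, 0 ≤ (⟪a, f a⟫).re) (a b : H) :
    ‖⟪a, f b⟫‖ ^ 2 ≤ (⟪a, f a⟫).re * (⟪b, f b⟫).re := by
  set z : ℂ := ⟪a, f b⟫ with hz
  set α : ℝ := (⟪a, f a⟫).re with hα'
  set β : ℝ := (⟪b, f b⟫).re with hβ'
  set w : ℝ := ‖z‖ ^ 2 with hw
  have hba : ⟪b, f a⟫ = (starRingEnd ℂ) z := ((inner_conj_symm (f b) a).trans (hsa b a)).symm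
  have hzz : z * (starRingEnd ℂ) z = ((w : ℝ) : ℂ) := by
    rw [Complex.mul_conj, hw, Complex.normSq_eq_norm_sq]
  set d : H := ((starRingEnd ℂ) z) • b with hd
  have e1 : ⟪a, f d⟫ = ((w : ℝ) : ℂ) := by
    rw [hd, map_smul, inner_smul_right, ← hz, mul_comm, hzz]
  have e2 : ⟪d, f a⟫ = ((w : ℝ) : ℂ) := by
    rw [hd, inner_smul_left, hba, Complex.conj_conj, hzz]
  have e3 : ⟪d, f d⟫ = ((w : ℝ) : ℂ) * ⟪b, f b⟫ := by
    rw [hd, map_smul, inner_smul_left, inner_smul_right, Complex.conj_conj, ← mul_assoc, hzz]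
  have key : ∀ t : ℝ, 0 ≤ α - 2 * t * w + t ^ 2 * w * β := by
    intro t
    have hc := h0 (a - (t : ℂ) • d)
    have hfx : f (a - (t : ℂ) • d) = f a - (t : ℂ) • f d := by
      rw [map_sub, map_smul]
    have hexp : ⟪a - (t : ℂ) • d, f (a - (t : ℂ) • d)⟫
        = ⟪a, f a⟫ - ((2 * t * w : ℝ) : ℂ) + ((t ^ 2 * w : ℝ) : ℂ) * ⟪b, f b⟫ := by
      rw [hfx, hd]
      simp only [map_smul, inner_smul_left, inner_smul_right, inner_sub_left, inner_sub_right,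
        Complex.conj_ofReal, Complex.conj_conj, hba, ← hz]
      push_cast
      linear_combination ((t : ℂ) ^ 2 * ⟪b, f b⟫ - 2 * (t : ℂ)) * hzz
    rw [hexp] at hc
    have hre : (⟪a, f a⟫ - ((2 * t * w : ℝ) : ℂ) + ((t ^ 2 * w : ℝ) : ℂ) * ⟪b, f b⟫).re
        = α - 2 * t * w + t ^ 2 * w * β := by
      rw [Complex.add_re, Complex.sub_re, Complex.ofReal_re, Complex.re_ofReal_mul, hα', hβ']
    rw [hre] at hc
    linarith
  have hαnn : 0 ≤ α := h0 a
  have hβnn : 0 ≤ β := h0 b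
  have hwnn : 0 ≤ w := by rw [hw]; positivity
  show w ≤ α * β
  rcases eq_or_lt_of_le hβnn with hβ0 | hβpos
  · -- β = 0 : show w = 0
    have hw0 : w ≤ 0 := by
      by_contra hpos
      push_neg at hpos
      have h := key ((α + 1) / (2 * w))
      rw [← hβ0] at h
      have h2w : (2 : ℝ) * w ≠ 0 := by positivity
      have he : 2 * ((α + 1) / (2 * w)) * w = α + 1 := by
        field_simp
      nlinarith
    have : w = 0 := le_antisymm hw0 hwnn
    rw [this]
    positivity
  · have h := key (1 / β)
    have hbne : β ≠ 0 := ne_of_gt hβpos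
    have e4 : (1 / β) ^ 2 * w * β = w * (1 / β) := by
      field_simp
    have e5 : 2 * (1 / β) * w = 2 * (w * (1 / β)) := by ring
    rw [e4, e5] at h
    have h' : w * (1 / β) ≤ α := by linarith
    have e6 : w = w * (1 / β) * β := by field_simp
    nlinarith

/-- Log-convex bounded sequences are non-increasing at the start. -/
lemma seq_bootstrap (c : ℕ → ℝ) (h0 : ∀ k, 0 ≤ c k)
    (hlog : ∀ k, c (k + 1) ^ 2 ≤ c k * c (k + 2)) (β : ℝ) (hβ : ∀ k, c k ≤ β) :
    c 1 ≤ c 0 := by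
  by_contra hlt
  push_neg at hlt
  have hc0 : 0 < c 0 := by
    rcases (h0 0).lt_or_eq with h | h
    · exact h
    · exfalso
      have h2 := hlog 0
      rw [← h] at h2
      simp at h2
      nlinarith [h0 1, h0 2, hlt, sq_nonneg (c 1)]
  set ρ := c 1 / c 0 with hρdef
  have hρ : 1 < ρ := (one_lt_div hc0).2 hlt
  have key : ∀ k, 0 < c k ∧ ρ * c k ≤ c (k + 1) := by
    intro k
    induction k with
    | zero => exact ⟨hc0, by rw [hρdef]; rw [div_mul_cancel₀]; exact ne_of_gt hc0⟩
    | succ n ih =>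
      obtain ⟨hpos, hstep⟩ := ih
      have hcn1 : 0 < c (n + 1) := lt_of_lt_of_le (by positivity) hstep
      refine ⟨hcn1, ?_⟩
      have h2 := hlog n
      -- c (n+2) ≥ c(n+1)^2 / c n ≥ ρ * c (n+1)
      have : ρ * c (n + 1) * c n ≤ c (n + 1) ^ 2 := by nlinarith
      nlinarith
  have grow : ∀ k, ρ ^ k * c 0 ≤ c k := by
    intro k
    induction k with
    | zero => simp
    | succ n ih =>
      calc ρ ^ (n + 1) * c 0 = ρ * (ρ ^ n * c 0) := by ring
      _ ≤ ρ * c n := by nlinarith [(key n).1, pow_pos (lt_trans one_pos hρ) n]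
      _ ≤ c (n + 1) := (key n).2
  obtain ⟨k, hk⟩ := pow_unbounded_of_one_lt (β / c 0) hρ
  have := grow k
  have hβk := hβ k
  rw [div_lt_iff₀ hc0] at hk
  linarith

/-- The key monotonicity ("Löwner") bootstrap: if `E` has a nonnegative hermitian form,
`M` is a contraction and `E ∘ M` is formally self-adjoint, then the form of `E∘M`
is dominated by the form of `E`. -/
lemma loewner_bootstrap (E M : H → H)
    (hEsa : ∀ a b : H, ⟪E a, b⟫ = ⟪a, E b⟫)
    (h0 : ∀ a : H, 0 ≤ (⟪a, E a⟫).re)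
    (hCS : ∀ a b : H, ‖⟪a, E b⟫‖ ^ 2 ≤ (⟪a, E a⟫).re * (⟪b, E b⟫).re)
    (hEbd : ∀ a : H, ‖E a‖ ≤ ‖a‖)
    (hM : ∀ a : H, ‖M a‖ ≤ ‖a‖)
    (hEM : ∀ a b : H, ⟪E (M a), b⟫ = ⟪a, E (M b)⟫) (v : H) :
    (⟪v, E (M v)⟫).re ≤ (⟪v, E v⟫).re := by
  set c : ℕ → ℝ := fun k => Real.sqrt ((⟪M^[k] v, E (M^[k] v)⟫).re) with hcdef
  have hck : ∀ k, c k ^ 2 = (⟪M^[k] v, E (M^[k] v)⟫).re := by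
    intro k
    exact Real.sq_sqrt (h0 _)
  have hcnn : ∀ k, 0 ≤ c k := fun k => Real.sqrt_nonneg _
  have hMk : ∀ k, ‖M^[k] v‖ ≤ ‖v‖ := by
    intro k
    induction k with
    | zero => simp
    | succ n ih =>
      rw [Function.iterate_succ_apply']
      exact le_trans (hM _) ih
  have hcb : ∀ k, c k ≤ ‖v‖ := by
    intro k
    have h1 : (⟪M^[k] v, E (M^[k] v)⟫).re ≤ ‖v‖ ^ 2 := by
      calc (⟪M^[k] v, E (M^[k] v)⟫).re ≤ ‖M^[k] v‖ * ‖E (M^[k] v)‖ :=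
            le_trans (re_le_norm' _) (norm_inner_le_norm _ _)
      _ ≤ ‖M^[k] v‖ * ‖M^[k] v‖ := by
          have := hEbd (M^[k] v)
          nlinarith [norm_nonneg (M^[k] v)]
      _ ≤ ‖v‖ * ‖v‖ := by nlinarith [hMk k, norm_nonneg (M^[k] v), norm_nonneg v]
      _ = ‖v‖ ^ 2 := by ring
    rw [hcdef]
    calc Real.sqrt ((⟪M^[k] v, E (M^[k] v)⟫).re) ≤ Real.sqrt (‖v‖ ^ 2) := Real.sqrt_le_sqrt h1
    _ = ‖v‖ := Real.sqrt_sq (norm_nonneg v)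
  have hshift : ∀ x : H, ⟪M x, E (M x)⟫ = (starRingEnd ℂ) ⟪x, E (M (M x))⟫ := by
    intro x
    rw [← hEM x (M x), inner_conj_symm]
  have habs : ∀ a b : H, ‖⟪a, E b⟫‖ ≤ c 0 * c 0 → True := fun _ _ _ => trivial
  have hprod : ∀ (a b : H) (x y : ℝ), 0 ≤ x → 0 ≤ y →
      ‖⟪a, E a⟫‖ ^ 0 = 1 → True := fun _ _ _ _ _ _ _ => trivial
  have hCS' : ∀ j k : ℕ, ‖⟪M^[j] v, E (M^[k] v)⟫‖ ≤ c j * c k := by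
    intro j k
    have h1 := hCS (M^[j] v) (M^[k] v)
    rw [← hck j, ← hck k] at h1
    nlinarith [norm_nonneg (⟪M^[j] v, E (M^[k] v)⟫ : ℂ), hcnn j, hcnn k,
      mul_nonneg (hcnn j) (hcnn k)]
  have hlog : ∀ k, c (k + 1) ^ 2 ≤ c k * c (k + 2) := by
    intro k
    have h1 : c (k + 1) ^ 2 = (⟪M (M^[k] v), E (M (M^[k] v))⟫).re := by
      rw [hck, Function.iterate_succ_apply']
    have h2 : M (M (M^[k] v)) = M^[k + 2] v := by
      rw [Function.iterate_succ_apply', Function.iterate_succ_apply']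
    rw [h1, hshift (M^[k] v), Complex.conj_re, h2]
    calc (⟪M^[k] v, E (M^[k + 2] v)⟫).re ≤ ‖⟪M^[k] v, E (M^[k + 2] v)⟫‖ :=
          re_le_norm' _
    _ ≤ c k * c (k + 2) := hCS' k (k + 2)
  have hfin : c 1 ≤ c 0 := seq_bootstrap c hcnn hlog ‖v‖ hcb
  have h1 : (⟪v, E (M v)⟫).re ≤ ‖⟪v, E (M v)⟫‖ := re_le_norm' _
  have h2 : ‖⟪v, E (M v)⟫‖ ≤ c 0 * c 1 := by
    have := hCS' 0 1
    simpa using this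
  have h3 : c 0 ^ 2 = (⟪v, E v⟫).re := by
    have := hck 0
    simpa using this
  nlinarith [hcnn 0, hcnn 1]


section PMapInfra

lemma PMapSelfAdj.mem_and_eq {X : H →ₗ.[ℂ] H} (hsa : PMapSelfAdj X)
    (hd : X.domainᗮ = ⊥) {a b : H}
    (h : ∀ u : X.domain, ⟪X u, a⟫ = ⟪(u : H), b⟫) :
    ∃ ha : a ∈ X.domain, X ⟨a, ha⟩ = b := by
  have ha := hsa.2 a b h
  refine ⟨ha, ?_⟩
  have horth : X ⟨a, ha⟩ - b ∈ X.domainᗮ := by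
    rw [Submodule.mem_orthogonal]
    intro u hu
    have h2 := hsa.1 ⟨a, ha⟩ ⟨u, hu⟩
    have h3 := h ⟨u, hu⟩
    have h4 : ⟪u, X ⟨a, ha⟩⟫ = ⟪u, b⟫ := by
      calc ⟪u, X ⟨a, ha⟩⟫ = (starRingEnd ℂ) ⟪X ⟨a, ha⟩, u⟫ := (inner_conj_symm _ _).symm
      _ = (starRingEnd ℂ) ⟪a, X ⟨u, hu⟩⟫ := by rw [h2]
      _ = ⟪X ⟨u, hu⟩, a⟫ := inner_conj_symm _ _
      _ = ⟪u, b⟫ := h3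
    rw [inner_sub_right, h4, sub_self]
  rw [hd, Submodule.mem_bot] at horth
  exact sub_eq_zero.mp horth

lemma PMapSelfAdj.closed_seq {X : H →ₗ.[ℂ] H} (hsa : PMapSelfAdj X)
    (hd : X.domainᗮ = ⊥) {u : ℕ → H} (hu : ∀ n, u n ∈ X.domain)
    {a b : H} (hua : Filter.Tendsto u Filter.atTop (𝓝 a))
    (hub : Filter.Tendsto (fun n => X ⟨u n, hu n⟩) Filter.atTop (𝓝 b)) :
    ∃ ha : a ∈ X.domain, X ⟨a, ha⟩ = b := by
  apply hsa.mem_and_eq hd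
  intro w
  have t1 : Filter.Tendsto (fun n => ⟪X w, u n⟫) Filter.atTop (𝓝 ⟪X w, a⟫) :=
    tendsto_const_nhds.inner hua
  have t2 : Filter.Tendsto (fun n => ⟪(w : H), X ⟨u n, hu n⟩⟫) Filter.atTop (𝓝 ⟪(w : H), b⟫) :=
    tendsto_const_nhds.inner hub
  have heq : (fun n => ⟪X w, u n⟫) = fun n => ⟪(w : H), X ⟨u n, hu n⟩⟫ := by
    funext n
    exact hsa.1 w ⟨u n, hu n⟩
  rw [heq] at t1
  exact tendsto_nhds_unique t1 t2

lemma graph_isClosed {X : H →ₗ.[ℂ] H} (hsa : PMapSelfAdj X) (hd : X.domainᗮ = ⊥) :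
    IsClosed (X.graph : Set (H × H)) := by
  apply IsSeqClosed.isClosed
  intro γ p hγ hlim
  choose w hw using fun n => (X.mem_graph_iff).1 (hγ n)
  have h1 : Filter.Tendsto (fun n => ((w n : H))) Filter.atTop (𝓝 p.1) := by
    have h := (continuous_fst.tendsto p).comp hlim
    refine h.congr fun n => ?_
    exact (hw n).1.symm
  have h2 : Filter.Tendsto (fun n => X (w n)) Filter.atTop (𝓝 p.2) := by
    have h := (continuous_snd.tendsto p).comp hlim
    refine h.congr fun n => ?_
    exact (hw n).2.symm
  obtain ⟨ha, hXa⟩ := hsa.closed_seq (u := fun n => ((w n : H))) hd (fun n => (w n).2) h1 h2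
  exact (X.mem_graph_iff).2 ⟨⟨p.1, ha⟩, rfl, hXa⟩

local notation "W2" => WithLp 2 (H × H)

lemma graphW_isClosed {X : H →ₗ.[ℂ] H} (hsa : PMapSelfAdj X) (hd : X.domainᗮ = ⊥) :
    IsClosed ((X.graph.comap (WithLp.linearEquiv 2 ℂ (H × H)).toLinearMap : Submodule ℂ W2) :
      Set W2) := by
  have h : ((X.graph.comap (WithLp.linearEquiv 2 ℂ (H × H)).toLinearMap : Submodule ℂ W2) :
      Set W2) = (⇑(WithLp.prodContinuousLinearEquiv 2 ℂ H H)) ⁻¹' (X.graph : Set (H × H)) := rfl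
  rw [h]
  exact (graph_isClosed hsa hd).preimage (WithLp.prodContinuousLinearEquiv 2 ℂ H H).continuous

lemma vonNeumann {X : H →ₗ.[ℂ] H} (hsa : PMapSelfAdj X) (hd : X.domainᗮ = ⊥) (y : H) :
    ∃ (u : H) (hu : u ∈ X.domain) (hu2 : X ⟨u, hu⟩ ∈ X.domain),
      u + X ⟨X ⟨u, hu⟩, hu2⟩ = y := by
  classical
  set le2 := WithLp.linearEquiv 2 ℂ (H × H) with hle2
  set Γ : Submodule ℂ W2 := X.graph.comap le2.toLinearMap with hΓ
  have hmem : ∀ γ : W2, γ ∈ Γ ↔ le2 γ ∈ X.graph := fun γ => Iff.rfl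
  have hΓc : IsClosed (Γ : Set W2) := graphW_isClosed hsa hd
  haveI : CompleteSpace Γ := hΓc.completeSpace_coe
  obtain ⟨p, hp, o, ho, hsum⟩ := Submodule.exists_add_mem_mem_orthogonal (K := Γ) (le2.symm (y, 0))
  obtain ⟨pu, hpu⟩ := (X.mem_graph_iff).1 ((hmem p).1 hp)
  have hochar : ∀ x : X.domain, ⟪X x, (le2 o).2⟫ = ⟪(x : H), -(le2 o).1⟫ := by
    intro x
    have hxΓ : le2.symm ((x : H), X x) ∈ Γ := by
      rw [hmem, le2.apply_symm_apply]
      exact X.mem_graph x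
    have h0 := (Submodule.mem_orthogonal Γ o).1 ho _ hxΓ
    have hinner : (inner ℂ (le2.symm ((x : H), X x)) o : ℂ)
        = ⟪(x : H), (le2 o).1⟫ + ⟪X x, (le2 o).2⟫ := by
      rw [WithLp.prod_inner_apply]
      rfl
    rw [hinner] at h0
    rw [inner_neg_right]
    linear_combination h0
  obtain ⟨hb, hXb⟩ := hsa.mem_and_eq hd hochar
  have h1 : ((y, (0 : H)) : H × H) = le2 p + le2 o := by
    rw [← map_add, ← hsum, le2.apply_symm_apply]
  have hy : y = (le2 p).1 + (le2 o).1 := by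
    have := congrArg Prod.fst h1
    simpa using this
  have h0' : (le2 p).2 + (le2 o).2 = 0 := by
    have := congrArg Prod.snd h1
    simpa using this.symm
  have hp1 : (le2 p).1 = (pu : H) := hpu.1.symm
  have hp2 : (le2 p).2 = X pu := hpu.2.symm
  have hXpu : X pu = -(le2 o).2 := by
    rw [← hp2]
    exact eq_neg_of_add_eq_zero_left h0' 
  have hmem2 : X pu ∈ X.domain := by
    rw [hXpu]
    exact X.domain.neg_mem hb
  have hval : X ⟨X pu, hmem2⟩ = (le2 o).1 := by
    have he : (⟨X pu, hmem2⟩ : X.domain) = -⟨(le2 o).2, hb⟩ := Subtype.ext (by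
      show X pu = -(le2 o).2
      exact hXpu)
    have h6 : X ⟨X pu, hmem2⟩ = X (-(⟨(le2 o).2, hb⟩ : X.domain)) :=
      congrArg (fun t : X.domain => X t) he
    rw [h6, LinearPMap.map_neg, hXb, neg_neg]
  refine ⟨(pu : H), pu.2, hmem2, ?_⟩
  have hval' : X ⟨X ⟨(pu : H), pu.2⟩, hmem2⟩ = (le2 o).1 := hval
  rw [hval', hy, hp1]

set_option synthInstance.maxHeartbeats 1000000 in
lemma core_seq {X : H →ₗ.[ℂ] H} (hsa : PMapSelfAdj X) (hd : X.domainᗮ = ⊥) (x : X.domain) :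
    ∃ u : ℕ → X.domain, (∀ n, X (u n) ∈ X.domain) ∧
      Filter.Tendsto (fun n => ((u n : H))) Filter.atTop (𝓝 (x : H)) ∧
      Filter.Tendsto (fun n => X (u n)) Filter.atTop (𝓝 (X x)) := by
  classical
  set le2 := WithLp.linearEquiv 2 ℂ (H × H) with hle2
  set Γ : Submodule ℂ W2 := X.graph.comap le2.toLinearMap with hΓ
  set Γ₂ : Submodule ℂ W2 :=
    Γ ⊓ (X.domain.comap ((LinearMap.snd ℂ H H).comp le2.toLinearMap)) with hΓ₂
  have hmem : ∀ γ : W2, γ ∈ Γ ↔ le2 γ ∈ X.graph := fun γ => Iff.rfl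
  have hmem2 : ∀ γ : W2, γ ∈ Γ₂ ↔ le2 γ ∈ X.graph ∧ (le2 γ).2 ∈ X.domain := fun γ => Iff.rfl
  have hΓc : IsClosed (Γ : Set W2) := graphW_isClosed hsa hd
  have key : ∀ γ : W2, γ ∈ Γ → γ ∈ Γ₂ᗮ → γ = 0 := by
    intro γ hγ hγo
    obtain ⟨g, hg1, hg2⟩ := (X.mem_graph_iff).1 ((hmem γ).1 hγ)
    have hzero : ∀ z : H, ⟪z, (g : H)⟫ = 0 := by
      intro z
      obtain ⟨v, hv, hv2, hvz⟩ := vonNeumann hsa hd z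
      have hδ : le2.symm ((v : H), X ⟨v, hv⟩) ∈ Γ₂ := by
        rw [hmem2, le2.apply_symm_apply]
        exact ⟨(X.mem_graph_iff).2 ⟨⟨v, hv⟩, rfl, rfl⟩, hv2⟩
      have h0 := (Submodule.mem_orthogonal Γ₂ γ).1 hγo _ hδ
      have hinner : (inner ℂ (le2.symm ((v : H), X ⟨v, hv⟩)) γ : ℂ)
          = ⟪v, (le2 γ).1⟫ + ⟪X ⟨v, hv⟩, (le2 γ).2⟫ := by
        rw [WithLp.prod_inner_apply]; rfl
      rw [hinner, ← hg1, ← hg2] at h0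
      calc ⟪z, (g : H)⟫ = ⟪v + X ⟨X ⟨v, hv⟩, hv2⟩, (g : H)⟫ := by rw [hvz]
      _ = ⟪v, (g : H)⟫ + ⟪X ⟨X ⟨v, hv⟩, hv2⟩, (g : H)⟫ := inner_add_left _ _ _
      _ = ⟪v, (g : H)⟫ + ⟪X ⟨v, hv⟩, X g⟫ := by rw [hsa.1 ⟨X ⟨v, hv⟩, hv2⟩ g]
      _ = 0 := h0
    have hg0 : (g : H) = 0 := by
      have := hzero (g : H)
      rwa [inner_self_eq_zero] at this
    have hγ0 : le2 γ = 0 := by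
      have e1 : (le2 γ).1 = 0 := by rw [← hg1, hg0]
      have e2 : (le2 γ).2 = 0 := by
        rw [← hg2, show g = 0 from Subtype.ext hg0, X.map_zero]
      exact Prod.ext e1 e2
    exact le2.map_eq_zero_iff.1 hγ0
  set K := Γ₂.topologicalClosure with hK
  have hKΓ : K ≤ Γ := Submodule.topologicalClosure_minimal Γ₂ inf_le_left hΓc
  haveI : CompleteSpace K := (Submodule.isClosed_topologicalClosure _).completeSpace_coe
  set γx : W2 := le2.symm ((x : H), X x) with hγx
  have hγxΓ : γx ∈ Γ := by
    rw [hmem, hγx, le2.apply_symm_apply]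
    exact X.mem_graph x
  obtain ⟨p, hp, o, ho, hsum⟩ := Submodule.exists_add_mem_mem_orthogonal (K := K) γx
  have hoΓ : o ∈ Γ := by
    have heo : o = γx - p := by rw [hsum]; abel
    rw [heo]
    exact Γ.sub_mem hγxΓ (hKΓ hp)
  have ho2 : o ∈ Γ₂ᗮ := (Submodule.orthogonal_le (Submodule.le_topologicalClosure _)) ho
  have ho0 : o = 0 := key o hoΓ ho2
  have hγxK : γx ∈ K := by
    rw [hsum, ho0, add_zero]
    exact hp
  have hcl : (γx : W2) ∈ closure (Γ₂ : Set W2) := by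
    rw [← Submodule.topologicalClosure_coe]
    exact hγxK
  obtain ⟨γn, hγn, hγnlim⟩ := mem_closure_iff_seq_limit.1 hcl
  choose g hg1 hg2 using fun n => (X.mem_graph_iff).1 (((hmem2 (γn n)).1 (hγn n)).1)
  have hgmem : ∀ n, X (g n) ∈ X.domain := by
    intro n
    have hh := ((hmem2 (γn n)).1 (hγn n)).2
    rwa [← hg2 n] at hh
  have hfst : Filter.Tendsto (fun n => (le2 (γn n)).1) Filter.atTop (𝓝 ((le2 γx).1)) :=
    ((continuous_fst.comp (WithLp.prodContinuousLinearEquiv 2 ℂ H H).continuous).tendsto γx).comp hγnlim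
  have hsnd : Filter.Tendsto (fun n => (le2 (γn n)).2) Filter.atTop (𝓝 ((le2 γx).2)) :=
    ((continuous_snd.comp (WithLp.prodContinuousLinearEquiv 2 ℂ H H).continuous).tendsto γx).comp hγnlim
  have hex : (le2 γx).1 = (x : H) := by rw [hγx, le2.apply_symm_apply]
  have heX : (le2 γx).2 = X x := by rw [hγx, le2.apply_symm_apply]
  refine ⟨g, hgmem, ?_, ?_⟩
  · rw [hex] at hfst
    exact hfst.congr fun n => (hg1 n).symm
  · rw [heX] at hsnd
    exact hsnd.congr fun n => (hg2 n).symm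

lemma dom_norm_transfer {X Y : H →ₗ.[ℂ] H} (hXsa : PMapSelfAdj X) (hXd : X.domainᗮ = ⊥)
    (hYsa : PMapSelfAdj Y) (hYd : Y.domainᗮ = ⊥)
    (D2 : Submodule ℂ H)
    (hsq : ∀ u : X.domain, X u ∈ X.domain → (u : H) ∈ D2)
    (hD2X : ∀ u ∈ D2, u ∈ X.domain)
    (hD2Y : ∀ u ∈ D2, u ∈ Y.domain)
    (hnorm : ∀ (u : H) (h2 : u ∈ D2), ‖X ⟨u, hD2X u h2⟩‖ = ‖Y ⟨u, hD2Y u h2⟩‖)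
    (x : X.domain) : ∃ hy : (x : H) ∈ Y.domain, ‖X x‖ = ‖Y ⟨(x : H), hy⟩‖ := by
  obtain ⟨u, hu2, hux, huX⟩ := core_seq hXsa hXd x
  have humem : ∀ n, ((u n : H)) ∈ D2 := fun n => hsq (u n) (hu2 n)
  have hXcauchy : CauchySeq (fun n => X (u n)) := huX.cauchySeq
  have hYdist : ∀ m n, dist (Y ⟨(u m : H), hD2Y _ (humem m)⟩) (Y ⟨(u n : H), hD2Y _ (humem n)⟩)
      = dist (X (u m)) (X (u n)) := by
    intro m n
    have hd2 : ((u m : H)) - ((u n : H)) ∈ D2 := D2.sub_mem (humem m) (humem n)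
    calc dist (Y ⟨(u m : H), hD2Y _ (humem m)⟩) (Y ⟨(u n : H), hD2Y _ (humem n)⟩)
        = ‖Y ⟨(u m : H), hD2Y _ (humem m)⟩ - Y ⟨(u n : H), hD2Y _ (humem n)⟩‖ := dist_eq_norm _ _
    _ = ‖Y (⟨(u m : H), hD2Y _ (humem m)⟩ - ⟨(u n : H), hD2Y _ (humem n)⟩)‖ := by
        rw [Y.map_sub]
    _ = ‖Y ⟨(u m : H) - (u n : H), hD2Y _ hd2⟩‖ := rfl
    _ = ‖X ⟨(u m : H) - (u n : H), hD2X _ hd2⟩‖ := (hnorm _ hd2).symm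
    _ = ‖X (u m - u n)‖ := rfl
    _ = ‖X (u m) - X (u n)‖ := by rw [X.map_sub]
    _ = dist (X (u m)) (X (u n)) := (dist_eq_norm _ _).symm
  have hYcauchy : CauchySeq (fun n => Y ⟨(u n : H), hD2Y _ (humem n)⟩) := by
    rw [Metric.cauchySeq_iff]
    intro ε hε
    obtain ⟨N, hN⟩ := Metric.cauchySeq_iff.1 hXcauchy ε hε
    exact ⟨N, fun m hm n hn => by rw [hYdist m n]; exact hN m hm n hn⟩
  obtain ⟨b, hb⟩ := cauchySeq_tendsto_of_complete hYcauchy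
  obtain ⟨hy, hYx⟩ := hYsa.closed_seq (u := fun n => ((u n : H))) hYd
    (fun n => hD2Y _ (humem n)) hux hb
  refine ⟨hy, ?_⟩
  have l1 : Filter.Tendsto (fun n => ‖X (u n)‖) Filter.atTop (𝓝 ‖X x‖) := huX.norm
  have l2 : Filter.Tendsto (fun n => ‖Y ⟨(u n : H), hD2Y _ (humem n)⟩‖) Filter.atTop
      (𝓝 ‖Y ⟨(x : H), hy⟩‖) := by
    rw [← hYx] at hb
    exact hb.norm
  have l3 : (fun n => ‖X (u n)‖) = fun n => ‖Y ⟨(u n : H), hD2Y _ (humem n)⟩‖ := by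
    funext n
    exact hnorm _ (humem n)
  rw [l3] at l1
  exact tendsto_nhds_unique l1 l2

lemma comp_form {S A : H →ₗ.[ℂ] H} (hSsym : PMapSymm S) (hcomp : PMapCompEq S S A)
    (w : A.domain) : ∃ hw : (w : H) ∈ S.domain,
      ⟪(w : H), A w⟫ = ((‖S ⟨(w : H), hw⟩‖ ^ 2 : ℝ) : ℂ) := by
  obtain ⟨hx, hSx, heq⟩ := hcomp.1 w
  refine ⟨hx, ?_⟩
  rw [heq]
  have h1 : ⟪(w : H), S ⟨S ⟨(w : H), hx⟩, hSx⟩⟫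
      = (starRingEnd ℂ) ⟪S ⟨S ⟨(w : H), hx⟩, hSx⟩, (w : H)⟫ := (inner_conj_symm _ _).symm
  have h2 : ⟪S ⟨S ⟨(w : H), hx⟩, hSx⟩, (w : H)⟫ = ⟪S ⟨(w : H), hx⟩, S ⟨(w : H), hx⟩⟫ :=
    hSsym ⟨S ⟨(w : H), hx⟩, hSx⟩ ⟨(w : H), hx⟩
  rw [h1, h2, inner_self_ofReal, Complex.conj_ofReal]

lemma sq_dom_orthotriv {X X2 : H →ₗ.[ℂ] H} (hXsym : PMapSymm X) (hXsa : PMapSelfAdj X)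
    (hXd : X.domainᗮ = ⊥) (hcomp : PMapCompEq X X X2) : X2.domainᗮ = ⊥ := by
  rw [Submodule.eq_bot_iff]
  intro w hw
  obtain ⟨u, hu, hu2, huw⟩ := vonNeumann hXsa hXd w
  have humem : u ∈ X2.domain := hcomp.2 ⟨u, hu⟩ hu2
  have h0 : ⟪u, w⟫ = 0 := (Submodule.mem_orthogonal _ _).1 hw u humem
  have h1 : ⟪u, X ⟨X ⟨u, hu⟩, hu2⟩⟫ = ((‖X ⟨u, hu⟩‖ ^ 2 : ℝ) : ℂ) := by
    have h2 : ⟪X ⟨X ⟨u, hu⟩, hu2⟩, u⟫ = ⟪X ⟨u, hu⟩, X ⟨u, hu⟩⟫ :=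
      hXsym ⟨X ⟨u, hu⟩, hu2⟩ ⟨u, hu⟩
    calc ⟪u, X ⟨X ⟨u, hu⟩, hu2⟩⟫
        = (starRingEnd ℂ) ⟪X ⟨X ⟨u, hu⟩, hu2⟩, u⟫ := (inner_conj_symm _ _).symm
    _ = (starRingEnd ℂ) ⟪X ⟨u, hu⟩, X ⟨u, hu⟩⟫ := by rw [h2]
    _ = ((‖X ⟨u, hu⟩‖ ^ 2 : ℝ) : ℂ) := by
        rw [inner_self_ofReal, Complex.conj_ofReal]
  have hre : ⟪u, w⟫ = (((‖u‖ ^ 2 + ‖X ⟨u, hu⟩‖ ^ 2 : ℝ) : ℂ)) := by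
    rw [← huw, inner_add_right, h1, inner_self_ofReal]
    push_cast
    ring
  rw [hre] at h0
  have h3 : ‖u‖ ^ 2 + ‖X ⟨u, hu⟩‖ ^ 2 = 0 := by exact_mod_cast h0
  have h4 : ‖u‖ = 0 := by nlinarith [norm_nonneg u, norm_nonneg (X ⟨u, hu⟩), sq_nonneg ‖u‖, sq_nonneg ‖X ⟨u, hu⟩‖]
  have hu0 : u = 0 := norm_eq_zero.1 h4
  subst hu0
  have z1 : (⟨(0 : H), hu⟩ : X.domain) = 0 := Subtype.ext rfl
  have z2 : X ⟨(0 : H), hu⟩ = 0 := by rw [z1, X.map_zero]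
  have z3 : (⟨X ⟨(0 : H), hu⟩, hu2⟩ : X.domain) = 0 := Subtype.ext z2
  have z4 : X ⟨X ⟨(0 : H), hu⟩, hu2⟩ = 0 := by rw [z3, X.map_zero]
  rw [← huw, z4, add_zero]

lemma exists_resolvent {S A : H →ₗ.[ℂ] H} (hSsym : PMapSymm S) (hSsa : PMapSelfAdj S)
    (hSd : S.domainᗮ = ⊥) (hAsym : PMapSymm A) (hcomp : PMapCompEq S S A) :
    ∃ (E : H → H) (hEmem : ∀ y : H, E y ∈ A.domain),
      (∀ y : H, E y + A ⟨E y, hEmem y⟩ = y) ∧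
      (∀ (y w : H) (hw : w ∈ A.domain), w + A ⟨w, hw⟩ = y → w = E y) ∧
      (∀ a b : H, E (a + b) = E a + E b) ∧
      (∀ (c : ℂ) (a : H), E (c • a) = c • E a) ∧
      (∀ a b : H, ⟪E a, b⟫ = ⟪a, E b⟫) ∧
      (∀ a : H, 0 ≤ (⟪a, E a⟫).re) ∧
      (∀ a : H, ‖E a‖ ≤ ‖a‖) := by
  classical
  have hVN : ∀ y : H, ∃ (u : H) (hu : u ∈ A.domain), u + A ⟨u, hu⟩ = y := by
    intro y
    obtain ⟨u, hu, hu2, huy⟩ := vonNeumann hSsa hSd y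
    have hA : u ∈ A.domain := hcomp.2 ⟨u, hu⟩ hu2
    refine ⟨u, hA, ?_⟩
    obtain ⟨hx, hSx, heq⟩ := hcomp.1 ⟨u, hA⟩
    have heq' : A ⟨u, hA⟩ = S ⟨S ⟨u, hu⟩, hu2⟩ := heq
    rw [heq']
    exact huy
  have huniq : ∀ (w : H) (hw : w ∈ A.domain), w + A ⟨w, hw⟩ = 0 → w = 0 := by
    intro w hw h0
    obtain ⟨hs, hform⟩ := comp_form hSsym hcomp ⟨w, hw⟩
    have h1 : ⟪w, w + A ⟨w, hw⟩⟫ = 0 := by rw [h0, inner_zero_right]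
    have hform' : ⟪w, A ⟨w, hw⟩⟫ = ((‖S ⟨w, hs⟩‖ ^ 2 : ℝ) : ℂ) := hform
    rw [inner_add_right, hform', inner_self_ofReal] at h1
    have h2 : ((‖w‖ ^ 2 + ‖S ⟨w, hs⟩‖ ^ 2 : ℝ) : ℂ) = 0 := by
      push_cast at h1 ⊢
      linear_combination h1
    have h3 : ‖w‖ ^ 2 + ‖S ⟨w, hs⟩‖ ^ 2 = 0 := by exact_mod_cast h2
    have h4 : ‖w‖ = 0 := by nlinarith [norm_nonneg w, norm_nonneg (S ⟨w, hs⟩)]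
    exact norm_eq_zero.1 h4
  choose e he hesolve using hVN
  have hkey : ∀ (y w : H) (hw : w ∈ A.domain), w + A ⟨w, hw⟩ = y → w = e y := by
    intro y w hw hsol
    have hd : w - e y ∈ A.domain := A.domain.sub_mem hw (he y)
    have hz : (w - e y) + A ⟨w - e y, hd⟩ = 0 := by
      have hmap : A ⟨w - e y, hd⟩ = A ⟨w, hw⟩ - A ⟨e y, he y⟩ :=
        A.map_sub ⟨w, hw⟩ ⟨e y, he y⟩
      rw [hmap]
      calc w - e y + (A ⟨w, hw⟩ - A ⟨e y, he y⟩)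
          = (w + A ⟨w, hw⟩) - (e y + A ⟨e y, he y⟩) := by abel
      _ = 0 := by rw [hsol, hesolve y, sub_self]
    exact sub_eq_zero.1 (huniq _ hd hz)
  have hadd : ∀ a b : H, e (a + b) = e a + e b := by
    intro a b
    refine (hkey (a + b) (e a + e b) (A.domain.add_mem (he a) (he b)) ?_).symm
    have hmap : A ⟨e a + e b, A.domain.add_mem (he a) (he b)⟩
        = A ⟨e a, he a⟩ + A ⟨e b, he b⟩ := A.map_add ⟨e a, he a⟩ ⟨e b, he b⟩
    rw [hmap]
    calc e a + e b + (A ⟨e a, he a⟩ + A ⟨e b, he b⟩)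
        = (e a + A ⟨e a, he a⟩) + (e b + A ⟨e b, he b⟩) := by abel
    _ = a + b := by rw [hesolve a, hesolve b]
  have hsmul : ∀ (c : ℂ) (a : H), e (c • a) = c • e a := by
    intro c a
    refine (hkey (c • a) (c • e a) (A.domain.smul_mem c (he a)) ?_).symm
    have hmap : A ⟨c • e a, A.domain.smul_mem c (he a)⟩ = c • A ⟨e a, he a⟩ :=
      A.map_smul c ⟨e a, he a⟩
    rw [hmap, ← smul_add, hesolve a]
  have hsa : ∀ a b : H, ⟪e a, b⟫ = ⟪a, e b⟫ := by
    intro a b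
    have l1 : ⟪e a, b⟫ = ⟪e a, e b⟫ + ⟪e a, A ⟨e b, he b⟩⟫ := by
      have h := inner_add_right (𝕜 := ℂ) (e a) (e b) (A ⟨e b, he b⟩)
      rw [hesolve b] at h
      exact h
    have r1 : ⟪a, e b⟫ = ⟪e a, e b⟫ + ⟪A ⟨e a, he a⟩, e b⟫ := by
      have h := inner_add_left (𝕜 := ℂ) (e a) (A ⟨e a, he a⟩) (e b)
      rw [hesolve a] at h
      exact h
    have m1 : ⟪e a, A ⟨e b, he b⟩⟫ = ⟪A ⟨e a, he a⟩, e b⟫ :=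
      (hAsym ⟨e a, he a⟩ ⟨e b, he b⟩).symm
    rw [l1, r1, m1]
  have hmemS : ∀ a : H, e a ∈ S.domain := fun a => (comp_form hSsym hcomp ⟨e a, he a⟩).choose
  have hform : ∀ a : H, ⟪e a, A ⟨e a, he a⟩⟫
      = ((‖S ⟨e a, hmemS a⟩‖ ^ 2 : ℝ) : ℂ) :=
    fun a => (comp_form hSsym hcomp ⟨e a, he a⟩).choose_spec
  have hnn : ∀ a : H, 0 ≤ (⟪a, e a⟫).re := by
    intro a
    have l1 : ⟪a, e a⟫ = ⟪e a, e a⟫ + ⟪A ⟨e a, he a⟩, e a⟫ := by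
      have h := inner_add_left (𝕜 := ℂ) (e a) (A ⟨e a, he a⟩) (e a)
      rw [hesolve a] at h
      exact h
    have l2 : ⟪A ⟨e a, he a⟩, e a⟫ = (starRingEnd ℂ) ⟪e a, A ⟨e a, he a⟩⟫ :=
      (inner_conj_symm _ _).symm
    rw [l1]
    rw [l2]
    rw [hform a]
    rw [Complex.conj_ofReal]
    rw [inner_self_ofReal]
    rw [Complex.add_re, Complex.ofReal_re, Complex.ofReal_re]
    positivity
  have hbd : ∀ a : H, ‖e a‖ ≤ ‖a‖ := by
    intro a
    have l1 : ⟪e a, a⟫ = ⟪e a, e a⟫ + ⟪e a, A ⟨e a, he a⟩⟫ := by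
      have h := inner_add_right (𝕜 := ℂ) (e a) (e a) (A ⟨e a, he a⟩)
      rw [hesolve a] at h
      exact h
    have l3 : (⟪e a, a⟫).re = ‖e a‖ ^ 2 + ‖S ⟨e a, hmemS a⟩‖ ^ 2 := by
      rw [l1, hform a, inner_self_ofReal, Complex.add_re, Complex.ofReal_re,
        Complex.ofReal_re]
    have l4 : (⟪e a, a⟫).re ≤ ‖e a‖ * ‖a‖ :=
      le_trans (re_le_norm' _) (norm_inner_le_norm _ _)
    nlinarith [norm_nonneg (e a), norm_nonneg a, sq_nonneg ‖S ⟨e a, hmemS a⟩‖]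
  exact ⟨e, he, hesolve, hkey, hadd, hsmul, hsa, hnn, hbd⟩

lemma key_ineq {S A T D : H →ₗ.[ℂ] H}
    (hSsym : PMapSymm S) (hSsa : PMapSelfAdj S) (hSd : S.domainᗮ = ⊥)
    (hAsym : PMapSymm A) (hDsym : PMapSymm D) (hTsym : PMapSymm T)
    (hcompS : PMapCompEq S S A) (hcompT : PMapCompEq T T D)
    (hAD : ∀ u : H, u ∈ A.domain → u ∈ D.domain)
    (hbd : ∀ (u : H) (hu : u ∈ A.domain) (hu' : u ∈ D.domain),
      ‖D ⟨u, hu'⟩‖ ≤ ‖u‖ + ‖A ⟨u, hu⟩‖) :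
    ∀ (u : H) (hu : u ∈ A.domain) (hs : u ∈ S.domain) (ht : u ∈ T.domain),
      ‖T ⟨u, ht⟩‖ ^ 2 ≤ Real.sqrt 2 * (‖u‖ ^ 2 + ‖S ⟨u, hs⟩‖ ^ 2) := by
  obtain ⟨E, hEmem, hEsolve, hEuniq, hEadd, hEsmul, hEsa, hE0, hEbd⟩ :=
    exists_resolvent hSsym hSsa hSd hAsym hcompS
  have hs2pos : (0 : ℝ) < Real.sqrt 2 := Real.sqrt_pos.2 (by norm_num)
  set c : ℂ := ((Real.sqrt 2 : ℝ) : ℂ)⁻¹ with hc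
  have hcconj : (starRingEnd ℂ) c = c := by
    rw [hc, map_inv₀, Complex.conj_ofReal]
  set Mf : H → H := fun v => c • (D ⟨E v, hAD _ (hEmem v)⟩) with hMfdef
  have hMfv : ∀ v : H, Mf v = c • (D ⟨E v, hAD _ (hEmem v)⟩) := fun v => rfl
  have hv2 : ∀ v : H, ‖E v‖ ^ 2 + ‖A ⟨E v, hEmem v⟩‖ ^ 2 ≤ ‖v‖ ^ 2 := by
    intro v
    obtain ⟨hsm, hform⟩ := comp_form hSsym hcompS ⟨E v, hEmem v⟩
    have h1 : ⟪v, v⟫ = ⟪E v + A ⟨E v, hEmem v⟩, E v + A ⟨E v, hEmem v⟩⟫ := by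
      rw [hEsolve v]
    rw [inner_add_add_self] at h1
    have h2 : ⟪E v, A ⟨E v, hEmem v⟩⟫ = ((‖S ⟨E v, hsm⟩‖ ^ 2 : ℝ) : ℂ) := hform
    have h3 : ⟪A ⟨E v, hEmem v⟩, E v⟫ = ((‖S ⟨E v, hsm⟩‖ ^ 2 : ℝ) : ℂ) := by
      rw [← inner_conj_symm, h2, Complex.conj_ofReal]
    rw [inner_self_ofReal, inner_self_ofReal, inner_self_ofReal, h2, h3] at h1
    have h4 : ‖v‖ ^ 2 = ‖E v‖ ^ 2 + ‖S ⟨E v, hsm⟩‖ ^ 2 + ‖S ⟨E v, hsm⟩‖ ^ 2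
        + ‖A ⟨E v, hEmem v⟩‖ ^ 2 := by exact_mod_cast h1
    nlinarith [sq_nonneg ‖S ⟨E v, hsm⟩‖]
  have hMbd : ∀ v : H, ‖Mf v‖ ≤ ‖v‖ := by
    intro v
    have h1 : ‖Mf v‖ = (Real.sqrt 2)⁻¹ * ‖D ⟨E v, hAD _ (hEmem v)⟩‖ := by
      rw [hMfv v, norm_smul, hc, norm_inv, Complex.norm_real, Real.norm_eq_abs,
        abs_of_nonneg (le_of_lt hs2pos)]
    have h2 : ‖D ⟨E v, hAD _ (hEmem v)⟩‖ ≤ ‖E v‖ + ‖A ⟨E v, hEmem v⟩‖ := hbd _ (hEmem v) _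
    have h3 : ‖E v‖ + ‖A ⟨E v, hEmem v⟩‖ ≤ Real.sqrt 2 * ‖v‖ := by
      have h4 := hv2 v
      have h5 : (‖E v‖ + ‖A ⟨E v, hEmem v⟩‖) ^ 2 ≤ 2 * ‖v‖ ^ 2 := by
        nlinarith [sq_nonneg (‖E v‖ - ‖A ⟨E v, hEmem v⟩‖)]
      have h6 : Real.sqrt ((‖E v‖ + ‖A ⟨E v, hEmem v⟩‖) ^ 2) ≤ Real.sqrt (2 * ‖v‖ ^ 2) :=
        Real.sqrt_le_sqrt h5
      rw [Real.sqrt_sq (by positivity), Real.sqrt_mul (by norm_num), Real.sqrt_sq (norm_nonneg v)]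
        at h6
      exact h6
    calc ‖Mf v‖ = (Real.sqrt 2)⁻¹ * ‖D ⟨E v, hAD _ (hEmem v)⟩‖ := h1
    _ ≤ (Real.sqrt 2)⁻¹ * (Real.sqrt 2 * ‖v‖) :=
        mul_le_mul_of_nonneg_left (le_trans h2 h3) (by positivity)
    _ = ‖v‖ := by field_simp
  have hEM : ∀ a b : H, ⟪E (Mf a), b⟫ = ⟪a, E (Mf b)⟫ := by
    intro a b
    have l1 : ⟪E (Mf a), b⟫ = ⟪Mf a, E b⟫ := hEsa (Mf a) b
    have r1 : ⟪a, E (Mf b)⟫ = ⟪E a, Mf b⟫ := (hEsa a (Mf b)).symm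
    rw [l1, r1, hMfv a, hMfv b, inner_smul_left, inner_smul_right, hcconj]
    congr 1
    exact hDsym ⟨E a, hAD _ (hEmem a)⟩ ⟨E b, hAD _ (hEmem b)⟩
  have hCS : ∀ a b : H, ‖⟪a, E b⟫‖ ^ 2 ≤ (⟪a, E a⟫).re * (⟪b, E b⟫).re := fun a b =>
    herm_cs { toFun := E, map_add' := hEadd, map_smul' := hEsmul }
      (fun a b => hEsa a b) (fun a => hE0 a) a b
  have hmain := fun v : H => loewner_bootstrap E Mf hEsa hE0 hCS hEbd hMbd hEM v
  intro u hu hs ht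
  set v : H := u + A ⟨u, hu⟩ with hv
  have hEv : u = E v := hEuniq v u hu rfl
  obtain ⟨ht', hformT⟩ := comp_form hTsym hcompT ⟨u, hAD u hu⟩
  have hformT' : ⟪u, D ⟨u, hAD u hu⟩⟫ = ((‖T ⟨u, ht⟩‖ ^ 2 : ℝ) : ℂ) := hformT
  have hDapp : D ⟨E v, hAD _ (hEmem v)⟩ = D ⟨u, hAD u hu⟩ :=
    congrArg (fun t : D.domain => D t) (Subtype.ext hEv.symm)
  have l1 : ⟪v, E (Mf v)⟫ = ⟪E v, Mf v⟫ := (hEsa v (Mf v)).symm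
  have l2 : ⟪E v, Mf v⟫ = c * ⟪E v, D ⟨E v, hAD _ (hEmem v)⟩⟫ := by
    rw [hMfv v]
    exact inner_smul_right _ _ _
  have l3 : ⟪E v, D ⟨E v, hAD _ (hEmem v)⟩⟫ = ((‖T ⟨u, ht⟩‖ ^ 2 : ℝ) : ℂ) := by
    rw [hDapp, ← hEv]
    exact hformT'
  have lhs1 : (⟪v, E (Mf v)⟫).re = (Real.sqrt 2)⁻¹ * ‖T ⟨u, ht⟩‖ ^ 2 := by
    rw [l1, l2, l3]
    have : c * ((‖T ⟨u, ht⟩‖ ^ 2 : ℝ) : ℂ) = (((Real.sqrt 2)⁻¹ * ‖T ⟨u, ht⟩‖ ^ 2 : ℝ) : ℂ) := by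
      rw [hc]
      push_cast
      ring
    rw [this, Complex.ofReal_re]
  obtain ⟨hs', hformS⟩ := comp_form hSsym hcompS ⟨u, hu⟩
  have hformS' : ⟪u, A ⟨u, hu⟩⟫ = ((‖S ⟨u, hs⟩‖ ^ 2 : ℝ) : ℂ) := hformS
  have rhs1 : (⟪v, E v⟫).re = ‖u‖ ^ 2 + ‖S ⟨u, hs⟩‖ ^ 2 := by
    have e1 : ⟪v, E v⟫ = ⟪v, u⟫ := by rw [← hEv]
    have e2 : ⟪v, u⟫ = ⟪u, u⟫ + ⟪A ⟨u, hu⟩, u⟫ := by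
      rw [hv]
      exact inner_add_left _ _ _
    have e3 : ⟪A ⟨u, hu⟩, u⟫ = ((‖S ⟨u, hs⟩‖ ^ 2 : ℝ) : ℂ) := by
      rw [← inner_conj_symm, hformS', Complex.conj_ofReal]
    rw [e1, e2, e3, inner_self_ofReal, Complex.add_re, Complex.ofReal_re, Complex.ofReal_re]
  have h := hmain v
  rw [lhs1, rhs1] at h
  have h' := mul_le_mul_of_nonneg_left h (le_of_lt hs2pos)
  rw [← mul_assoc, mul_inv_cancel₀ (ne_of_gt hs2pos), one_mul] at h'
  exact h'

lemma sqrt_dom_le {S A T : H →ₗ.[ℂ] H}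
    (hSsa : PMapSelfAdj S) (hSd : S.domainᗮ = ⊥)
    (hTsa : PMapSelfAdj T) (hTd : T.domainᗮ = ⊥)
    (hcompS : PMapCompEq S S A)
    (hAT : ∀ u : H, u ∈ A.domain → u ∈ T.domain)
    (hAS : ∀ u : H, u ∈ A.domain → u ∈ S.domain)
    (hbound : ∀ (u : H) (hu : u ∈ A.domain),
      ‖T ⟨u, hAT u hu⟩‖ ^ 2 ≤ Real.sqrt 2 * (‖u‖ ^ 2 + ‖S ⟨u, hAS u hu⟩‖ ^ 2)) :
    S.domain ≤ T.domain := by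
  intro x hx
  obtain ⟨u, hu2, hux, huS⟩ := core_seq hSsa hSd ⟨x, hx⟩
  have humem : ∀ n, ((u n : H)) ∈ A.domain := fun n => hcompS.2 (u n) (hu2 n)
  have hs2le : Real.sqrt 2 ≤ 2 := by
    nlinarith [Real.sq_sqrt (by norm_num : (2:ℝ) ≥ 0), Real.sqrt_nonneg 2]
  have hkey : ∀ m n, dist (T ⟨(u m : H), hAT _ (humem m)⟩) (T ⟨(u n : H), hAT _ (humem n)⟩)
      ≤ 2 * (dist ((u m : H)) ((u n : H)) + dist (S (u m)) (S (u n))) := by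
    intro m n
    have hd2 : ((u m : H)) - ((u n : H)) ∈ A.domain := A.domain.sub_mem (humem m) (humem n)
    have e1 : T ⟨(u m : H), hAT _ (humem m)⟩ - T ⟨(u n : H), hAT _ (humem n)⟩
        = T ⟨((u m : H)) - ((u n : H)), hAT _ hd2⟩ :=
      (T.map_sub ⟨(u m : H), hAT _ (humem m)⟩ ⟨(u n : H), hAT _ (humem n)⟩).symm
    have e2 : S (u m) - S (u n) = S ⟨((u m : H)) - ((u n : H)), hAS _ hd2⟩ :=
      (S.map_sub (u m) (u n)).symm
    have hb := hbound _ hd2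
    rw [← e2] at hb
    have hTnn := norm_nonneg (T ⟨((u m : H)) - ((u n : H)), hAT _ hd2⟩)
    have hdn := norm_nonneg (((u m : H)) - ((u n : H)))
    have hsn := norm_nonneg (S (u m) - S (u n))
    have h3 : ‖T ⟨((u m : H)) - ((u n : H)), hAT _ hd2⟩‖
        ≤ 2 * (‖((u m : H)) - ((u n : H))‖ + ‖S (u m) - S (u n)‖) := by
      nlinarith [hb, sq_nonneg (‖((u m : H)) - ((u n : H))‖ - ‖S (u m) - S (u n)‖),
        sq_nonneg (‖((u m : H)) - ((u n : H))‖ + ‖S (u m) - S (u n)‖)]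
    rw [dist_eq_norm, dist_eq_norm, dist_eq_norm, e1]
    exact h3
  have hTc : CauchySeq (fun n => T ⟨(u n : H), hAT _ (humem n)⟩) := by
    rw [Metric.cauchySeq_iff]
    intro ε hε
    obtain ⟨N1, hN1⟩ := Metric.cauchySeq_iff.1 hux.cauchySeq (ε / 8) (by linarith)
    obtain ⟨N2, hN2⟩ := Metric.cauchySeq_iff.1 huS.cauchySeq (ε / 8) (by linarith)
    refine ⟨max N1 N2, fun m hm n hn => ?_⟩
    have d1 := hN1 m (le_trans (le_max_left _ _) hm) n (le_trans (le_max_left _ _) hn)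
    have d2 := hN2 m (le_trans (le_max_right _ _) hm) n (le_trans (le_max_right _ _) hn)
    have := hkey m n
    calc dist (T ⟨(u m : H), hAT _ (humem m)⟩) (T ⟨(u n : H), hAT _ (humem n)⟩)
        ≤ 2 * (dist ((u m : H)) ((u n : H)) + dist (S (u m)) (S (u n))) := this
    _ < ε := by linarith
  obtain ⟨b, hb⟩ := cauchySeq_tendsto_of_complete hTc
  obtain ⟨hy, _⟩ := hTsa.closed_seq (u := fun n => ((u n : H))) hTd
    (fun n => hAT _ (humem n)) hux hb
  exact hy

end PMapInfra

/-- Let `B` be self-adjoint, `J` a bounded self-adjoint involution such that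
`C := B + J` (on `dom B`) is boundedly invertible.  Then `dom |B|^{1/2} = dom |B+J|^{1/2}`.
Here `|B|` is encoded as the non-negative self-adjoint operator with `|B|² = B²` (and
similarly `|C|`), and `sqrtAbsB`, `sqrtAbsC` are their non-negative self-adjoint square roots. -/

theorem stmt6 (B : H →ₗ.[ℂ] H) (hBsa : PMapSelfAdj B)
    (J : H →L[ℂ] H) (hJsa : IsSelfAdjoint J) (hJ2 : J * J = 1)
    (C : H →ₗ.[ℂ] H) (hCdom : C.domain = B.domain)
    (hCmem : ∀ x : C.domain, (x : H) ∈ B.domain)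
    (hCval : ∀ x : C.domain, C x = B ⟨x, hCmem x⟩ + J (x : H))
    (G : H →L[ℂ] H) (hGmem : ∀ y : H, G y ∈ C.domain)
    (hGright : ∀ y : H, C ⟨G y, hGmem y⟩ = y)
    (hGleft : ∀ x : C.domain, G (C x) = x)
    (B2 : H →ₗ.[ℂ] H) (hB2 : PMapCompEq B B B2)
    (C2 : H →ₗ.[ℂ] H) (hC2 : PMapCompEq C C C2)
    (AbsB : H →ₗ.[ℂ] H) (hAbsBsa : PMapSelfAdj AbsB) (hAbsB0 : PMapNonneg AbsB)
    (hAbsB : PMapCompEq AbsB AbsB B2)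
    (AbsC : H →ₗ.[ℂ] H) (hAbsCsa : PMapSelfAdj AbsC) (hAbsC0 : PMapNonneg AbsC)
    (hAbsC : PMapCompEq AbsC AbsC C2)
    (sqrtAbsB : H →ₗ.[ℂ] H) (hsB : PMapIsSqrt sqrtAbsB AbsB)
    (sqrtAbsC : H →ₗ.[ℂ] H) (hsC : PMapIsSqrt sqrtAbsC AbsC) :
    sqrtAbsB.domain = sqrtAbsC.domain := by
  classical
  have hBsym : PMapSymm B := hBsa.1
  -- J facts
  have hJadj : ∀ x y : H, (inner ℂ (J x) y : ℂ) = inner ℂ x (J y) := by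
    intro x y
    have hadj : ContinuousLinearMap.adjoint J = J := by
      rw [← ContinuousLinearMap.star_eq_adjoint]
      exact hJsa
    conv_lhs => rw [← hadj]
    exact ContinuousLinearMap.adjoint_inner_left J y x
  have hJJ : ∀ x : H, J (J x) = x := by
    intro x
    have h := congrFun (congrArg (fun (A : H →L[ℂ] H) => (A : H → H)) hJ2) x
    simpa using h
  have hJiso : ∀ x : H, ‖J x‖ = ‖x‖ := by
    intro x
    have h1 : (inner ℂ (J x) (J x) : ℂ) = inner ℂ x x := by
      rw [hJadj x (J x), hJJ x]
    rw [inner_self_ofReal, inner_self_ofReal] at h1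
    have h2 : ‖J x‖ ^ 2 = ‖x‖ ^ 2 := by exact_mod_cast h1
    rw [← Real.sqrt_sq (norm_nonneg (J x)), h2, Real.sqrt_sq (norm_nonneg x)]
  -- C is symmetric and self-adjoint
  have hCsym : PMapSymm C := by
    intro x y
    rw [hCval x, hCval y, inner_add_left, inner_add_right]
    congr 1
    · exact hBsym ⟨x, hCmem x⟩ ⟨y, hCmem y⟩
    · exact hJadj x y
  have hCsa : PMapSelfAdj C := by
    refine ⟨hCsym, ?_⟩
    intro y z h
    have h' : ∀ x : B.domain, (inner ℂ (B x) y : ℂ) = inner ℂ (x : H) (z - J y) := by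
      intro x
      have hxC : (x : H) ∈ C.domain := by rw [hCdom]; exact x.2
      have hx := h ⟨x, hxC⟩
      rw [hCval ⟨x, hxC⟩, inner_add_left] at hx
      have hBx : (inner ℂ (B ⟨(⟨(x : H), hxC⟩ : C.domain), hCmem ⟨(x : H), hxC⟩⟩) y : ℂ)
          = inner ℂ (B x) y := rfl
      rw [hBx] at hx
      rw [inner_sub_right]
      have hJx : (inner ℂ ((x : H)) (J y) : ℂ) = inner ℂ (J (x : H)) y := (hJadj _ _).symm
      rw [hJx]
      linear_combination hx
    have hmem := hBsa.2 y (z - J y) h'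
    rw [hCdom]
    exact hmem
  -- G is symmetric, C has dense domain
  have hGsa : ∀ a b : H, (inner ℂ (G a) b : ℂ) = inner ℂ a (G b) := by
    intro a b
    have h1 : (inner ℂ (G a) b : ℂ) = inner ℂ (G a) (C ⟨G b, hGmem b⟩) := by rw [hGright b]
    have h3 := hCsym ⟨G b, hGmem b⟩ ⟨G a, hGmem a⟩
    calc (inner ℂ (G a) b : ℂ) = inner ℂ (G a) (C ⟨G b, hGmem b⟩) := h1
    _ = (starRingEnd ℂ) (inner ℂ (C ⟨G b, hGmem b⟩) (G a)) := (inner_conj_symm _ _).symm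
    _ = (starRingEnd ℂ) (inner ℂ (G b) (C ⟨G a, hGmem a⟩)) := by rw [h3]
    _ = inner ℂ (C ⟨G a, hGmem a⟩) (G b) := inner_conj_symm _ _
    _ = inner ℂ a (G b) := by rw [hGright a]
  have hCd : C.domainᗮ = ⊥ := by
    rw [Submodule.eq_bot_iff]
    intro w hw
    have hallw : ∀ y : H, (inner ℂ y (G w) : ℂ) = 0 := by
      intro y
      have h1 : (inner ℂ y (G w) : ℂ) = inner ℂ (G y) w := (hGsa y w).symm
      rw [h1]
      exact (Submodule.mem_orthogonal _ _).1 hw (G y) (hGmem y)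
    have hGw : G w = 0 := by
      have := hallw (G w)
      rwa [inner_self_eq_zero] at this
    have hr := hGright w
    have hzero : (⟨G w, hGmem w⟩ : C.domain) = 0 := Subtype.ext hGw
    rw [hzero, C.map_zero] at hr
    exact hr.symm
  have hBd : B.domainᗮ = ⊥ := by rw [← hCdom]; exact hCd
  -- squares have trivial orthocomplement
  have hB2d : B2.domainᗮ = ⊥ := sq_dom_orthotriv hBsym hBsa hBd hB2
  have hC2d : C2.domainᗮ = ⊥ := sq_dom_orthotriv hCsym hCsa hCd hC2
  have hAd : AbsB.domainᗮ = ⊥ := by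
    have hle : B2.domain ≤ AbsB.domain := fun u hu => (hAbsB.1 ⟨u, hu⟩).choose
    rw [← le_bot_iff, ← hB2d]
    exact Submodule.orthogonal_le hle
  have hDd : AbsC.domainᗮ = ⊥ := by
    have hle : C2.domain ≤ AbsC.domain := fun u hu => (hAbsC.1 ⟨u, hu⟩).choose
    rw [← le_bot_iff, ← hC2d]
    exact Submodule.orthogonal_le hle
  have hSd : sqrtAbsB.domainᗮ = ⊥ := by
    have hle : AbsB.domain ≤ sqrtAbsB.domain := fun u hu => (hsB.2.2.1 ⟨u, hu⟩).choose
    rw [← le_bot_iff, ← hAd]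
    exact Submodule.orthogonal_le hle
  have hTd : sqrtAbsC.domainᗮ = ⊥ := by
    have hle : AbsC.domain ≤ sqrtAbsC.domain := fun u hu => (hsC.2.2.1 ⟨u, hu⟩).choose
    rw [← le_bot_iff, ← hDd]
    exact Submodule.orthogonal_le hle
  -- |B| and B have same domain and norms
  have hD2AbsB : ∀ u ∈ B2.domain, u ∈ AbsB.domain := fun u hu => (hAbsB.1 ⟨u, hu⟩).choose
  have hD2B : ∀ u ∈ B2.domain, u ∈ B.domain := fun u hu => (hB2.1 ⟨u, hu⟩).choose
  have hnormAB : ∀ (u : H) (h2 : u ∈ B2.domain),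
      ‖AbsB ⟨u, hD2AbsB u h2⟩‖ = ‖B ⟨u, hD2B u h2⟩‖ := by
    intro u h2
    obtain ⟨hw1, hf1⟩ := comp_form hAbsBsa.1 hAbsB ⟨u, h2⟩
    obtain ⟨hw2, hf2⟩ := comp_form hBsym hB2 ⟨u, h2⟩
    have hf1' : (inner ℂ u (B2 ⟨u, h2⟩) : ℂ) = ((‖AbsB ⟨u, hD2AbsB u h2⟩‖ ^ 2 : ℝ) : ℂ) := hf1
    have hf2' : (inner ℂ u (B2 ⟨u, h2⟩) : ℂ) = ((‖B ⟨u, hD2B u h2⟩‖ ^ 2 : ℝ) : ℂ) := hf2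
    have h3 : ‖AbsB ⟨u, hD2AbsB u h2⟩‖ ^ 2 = ‖B ⟨u, hD2B u h2⟩‖ ^ 2 := by
      have h4 := hf1'.symm.trans hf2'
      exact_mod_cast h4
    rw [← Real.sqrt_sq (norm_nonneg (AbsB ⟨u, hD2AbsB u h2⟩)), h3,
      Real.sqrt_sq (norm_nonneg (B ⟨u, hD2B u h2⟩))]
  have tAB := dom_norm_transfer hAbsBsa hAd hBsa hBd B2.domain hAbsB.2 hD2AbsB hD2B hnormAB
  have tBA := dom_norm_transfer hBsa hBd hAbsBsa hAd B2.domain hB2.2 hD2B hD2AbsB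
      (fun u h2 => (hnormAB u h2).symm)
  have hdomAB : ∀ u : H, u ∈ AbsB.domain ↔ u ∈ B.domain :=
    fun u => ⟨fun hu => (tAB ⟨u, hu⟩).choose, fun hu => (tBA ⟨u, hu⟩).choose⟩
  have hnAB : ∀ (u : H) (ha : u ∈ AbsB.domain) (hb : u ∈ B.domain),
      ‖AbsB ⟨u, ha⟩‖ = ‖B ⟨u, hb⟩‖ := fun u ha hb => (tAB ⟨u, ha⟩).choose_spec
  -- |C| and C have same domain and norms
  have hD2AbsC : ∀ u ∈ C2.domain, u ∈ AbsC.domain := fun u hu => (hAbsC.1 ⟨u, hu⟩).choose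
  have hD2C : ∀ u ∈ C2.domain, u ∈ C.domain := fun u hu => (hC2.1 ⟨u, hu⟩).choose
  have hnormDC : ∀ (u : H) (h2 : u ∈ C2.domain),
      ‖AbsC ⟨u, hD2AbsC u h2⟩‖ = ‖C ⟨u, hD2C u h2⟩‖ := by
    intro u h2
    obtain ⟨hw1, hf1⟩ := comp_form hAbsCsa.1 hAbsC ⟨u, h2⟩
    obtain ⟨hw2, hf2⟩ := comp_form hCsym hC2 ⟨u, h2⟩
    have hf1' : (inner ℂ u (C2 ⟨u, h2⟩) : ℂ) = ((‖AbsC ⟨u, hD2AbsC u h2⟩‖ ^ 2 : ℝ) : ℂ) := hf1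
    have hf2' : (inner ℂ u (C2 ⟨u, h2⟩) : ℂ) = ((‖C ⟨u, hD2C u h2⟩‖ ^ 2 : ℝ) : ℂ) := hf2
    have h3 : ‖AbsC ⟨u, hD2AbsC u h2⟩‖ ^ 2 = ‖C ⟨u, hD2C u h2⟩‖ ^ 2 := by
      have h4 := hf1'.symm.trans hf2'
      exact_mod_cast h4
    rw [← Real.sqrt_sq (norm_nonneg (AbsC ⟨u, hD2AbsC u h2⟩)), h3,
      Real.sqrt_sq (norm_nonneg (C ⟨u, hD2C u h2⟩))]
  have tDC := dom_norm_transfer hAbsCsa hDd hCsa hCd C2.domain hAbsC.2 hD2AbsC hD2C hnormDC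
  have tCD := dom_norm_transfer hCsa hCd hAbsCsa hDd C2.domain hC2.2 hD2C hD2AbsC
      (fun u h2 => (hnormDC u h2).symm)
  have hdomDC : ∀ u : H, u ∈ AbsC.domain ↔ u ∈ C.domain :=
    fun u => ⟨fun hu => (tDC ⟨u, hu⟩).choose, fun hu => (tCD ⟨u, hu⟩).choose⟩
  have hnDC : ∀ (u : H) (ha : u ∈ AbsC.domain) (hc : u ∈ C.domain),
      ‖AbsC ⟨u, ha⟩‖ = ‖C ⟨u, hc⟩‖ := fun u ha hc => (tDC ⟨u, ha⟩).choose_spec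
  -- membership transfers between AbsB and AbsC domains
  have hADmem : ∀ u : H, u ∈ AbsB.domain → u ∈ AbsC.domain := by
    intro u hu
    have h1 : u ∈ B.domain := (hdomAB u).1 hu
    have h2 : u ∈ C.domain := by rw [hCdom]; exact h1
    exact (hdomDC u).2 h2
  have hDAmem : ∀ u : H, u ∈ AbsC.domain → u ∈ AbsB.domain := by
    intro u hu
    have h1 : u ∈ C.domain := (hdomDC u).1 hu
    have h2 : u ∈ B.domain := by rw [← hCdom]; exact h1
    exact (hdomAB u).2 h2
  -- the norm comparisons
  have hbd1 : ∀ (u : H) (hu : u ∈ AbsB.domain) (hu' : u ∈ AbsC.domain),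
      ‖AbsC ⟨u, hu'⟩‖ ≤ ‖u‖ + ‖AbsB ⟨u, hu⟩‖ := by
    intro u hu hu'
    have huC : u ∈ C.domain := (hdomDC u).1 hu'
    have huB : u ∈ B.domain := (hdomAB u).1 hu
    rw [hnDC u hu' huC, hnAB u hu huB, hCval ⟨u, huC⟩]
    calc ‖B ⟨(⟨u, huC⟩ : C.domain), hCmem ⟨u, huC⟩⟩ + J u‖
        ≤ ‖B ⟨(⟨u, huC⟩ : C.domain), hCmem ⟨u, huC⟩⟩‖ + ‖J u‖ := norm_add_le _ _
    _ = ‖B ⟨u, huB⟩‖ + ‖u‖ := by rw [hJiso u]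
    _ = ‖u‖ + ‖B ⟨u, huB⟩‖ := by ring
  have hbd2 : ∀ (u : H) (hu : u ∈ AbsC.domain) (hu' : u ∈ AbsB.domain),
      ‖AbsB ⟨u, hu'⟩‖ ≤ ‖u‖ + ‖AbsC ⟨u, hu⟩‖ := by
    intro u hu hu'
    have huC : u ∈ C.domain := (hdomDC u).1 hu
    have huB : u ∈ B.domain := (hdomAB u).1 hu'
    rw [hnDC u hu huC, hnAB u hu' huB]
    have hBeq : B ⟨u, huB⟩ = C ⟨u, huC⟩ - J u := by
      rw [hCval ⟨u, huC⟩]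
      have : B ⟨(⟨u, huC⟩ : C.domain), hCmem ⟨u, huC⟩⟩ = B ⟨u, huB⟩ := rfl
      rw [this]
      abel
    rw [hBeq]
    calc ‖C ⟨u, huC⟩ - J u‖ ≤ ‖C ⟨u, huC⟩‖ + ‖J u‖ := norm_sub_le _ _
    _ = ‖C ⟨u, huC⟩‖ + ‖u‖ := by rw [hJiso u]
    _ = ‖u‖ + ‖C ⟨u, huC⟩‖ := by ring
  -- the two key inequalities
  have hkey1 := key_ineq hsB.1.1 hsB.1 hSd hAbsBsa.1 hAbsCsa.1 hsC.1.1 hsB.2.2 hsC.2.2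
    hADmem hbd1
  have hkey2 := key_ineq hsC.1.1 hsC.1 hTd hAbsCsa.1 hAbsBsa.1 hsB.1.1 hsC.2.2 hsB.2.2
    hDAmem hbd2
  -- memberships into the square-root domains
  have hAS : ∀ u : H, u ∈ AbsB.domain → u ∈ sqrtAbsB.domain :=
    fun u hu => (hsB.2.2.1 ⟨u, hu⟩).choose
  have hDT : ∀ u : H, u ∈ AbsC.domain → u ∈ sqrtAbsC.domain :=
    fun u hu => (hsC.2.2.1 ⟨u, hu⟩).choose
  have hAT : ∀ u : H, u ∈ AbsB.domain → u ∈ sqrtAbsC.domain :=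
    fun u hu => hDT u (hADmem u hu)
  have hDS : ∀ u : H, u ∈ AbsC.domain → u ∈ sqrtAbsB.domain :=
    fun u hu => hAS u (hDAmem u hu)
  apply le_antisymm
  · exact sqrt_dom_le hsB.1 hSd hsC.1 hTd hsB.2.2 hAT hAS
      (fun u hu => hkey1 u hu (hAS u hu) (hAT u hu))
  · exact sqrt_dom_le hsC.1 hTd hsB.1 hSd hsC.2.2 hDS hDT
      (fun u hu => hkey2 u hu (hDT u hu) (hDS u hu))
end
end

section
/- Let A ≥ 0 be self-adjoint, J_A a self-adjoint involution commuting with A, and H bounded self-adjoint with P_A H P_A ≥ α P_A and P_A^⊥ H P_A^⊥ ≤ -α P_A^⊥ for some α ∈ (0,1], where P_A = (I + J_A)/2. Define H̃ := (A^{1/2}(A+I)^{-1/2}) H (A^{1/2}(A+I)^{-1/2}) + (A+I)^{-1} J_A. Then P_A H̃ P_A ≥ α P_A and P_A^⊥ H̃ P_A^⊥ ≤ -α P_A^⊥; in particular H̃ is bounded, self-adjoint, and boundedly invertible. -/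
noncomputable section

open scoped ComplexOrder

variable {H : Type*} [NormedAddCommGroup H] [InnerProductSpace ℂ H] [CompleteSpace H]

set_option maxHeartbeats 1000000 in
/-- Let `A ≥ 0` be self-adjoint (encoded via its bounded, self-adjoint,
non-negative, injective resolvent `R = (A+1)⁻¹`), `J` a self-adjoint involution commuting with
`A` (hence with `R`), and `Hb` bounded self-adjoint with `P Hb P ≥ α P`,
`P⊥ Hb P⊥ ≤ -α P⊥` for some `α ∈ (0,1]`, where `P = (1+J)/2`.  With
`D := A^{1/2}(A+1)^{-1/2} = cfc (√(1-·)) R` define `H̃ := D Hb D + R J`.  Then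
`P H̃ P ≥ α P` and `P⊥ H̃ P⊥ ≤ -α P⊥`; in particular `H̃` is bounded, self-adjoint, and
boundedly invertible. -/
theorem stmt12 (A : H →ₗ.[ℂ] H) (hAsa : PMapSelfAdj A) (hA0 : PMapNonneg A)
    (R : H →L[ℂ] H) (hRsa : IsSelfAdjoint R)
    (hR0 : ∀ x : H, 0 ≤ (inner ℂ x (R x) : ℂ).re)
    (hRinj : Function.Injective R)
    (hdom : A.domain = LinearMap.range (R : H →ₗ[ℂ] H))
    (hmem : ∀ x : H, R x ∈ A.domain)
    (hrel : ∀ x : H, A ⟨R x, hmem x⟩ = x - R x)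
    (J : H →L[ℂ] H) (hJsa : IsSelfAdjoint J) (hJ2 : J * J = 1)
    (hJA : ∀ x : A.domain, ∃ h : J (x : H) ∈ A.domain, A ⟨J (x : H), h⟩ = J (A x))
    (hJR : J * R = R * J)
    (Hb : H →L[ℂ] H) (hHbsa : IsSelfAdjoint Hb)
    (α : ℝ) (hα : α ∈ Set.Ioc (0 : ℝ) 1)
    (P : H →L[ℂ] H) (hP : P = (2⁻¹ : ℂ) • (1 + J))
    (hpos : ∀ x : H, α * ‖P x‖ ^ 2 ≤ (inner ℂ (P x) (Hb (P x)) : ℂ).re)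
    (hneg : ∀ x : H, (inner ℂ ((1 - P) x) (Hb ((1 - P) x)) : ℂ).re ≤ -α * ‖(1 - P) x‖ ^ 2)
    (D : H →L[ℂ] H) (hD : D = cfc (fun r : ℝ => Real.sqrt (1 - r)) R)
    (tH : H →L[ℂ] H) (htH : tH = D * Hb * D + R * J) :
    (∀ x : H, α * ‖P x‖ ^ 2 ≤ (inner ℂ (P x) (tH (P x)) : ℂ).re) ∧
    (∀ x : H, (inner ℂ ((1 - P) x) (tH ((1 - P) x)) : ℂ).re ≤ -α * ‖(1 - P) x‖ ^ 2) ∧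
    IsSelfAdjoint tH ∧ ∃ G : H →L[ℂ] H, G * tH = 1 ∧ tH * G = 1 := by
  obtain ⟨hα0, hα1⟩ := hα
  rcases subsingleton_or_nontrivial H with hsub | hnt
  · refine ⟨fun x => ?_, fun x => ?_, Subsingleton.elim _ _, 1, Subsingleton.elim _ _,
      Subsingleton.elim _ _⟩ <;>
    · have hx : x = 0 := Subsingleton.elim x 0
      subst hx
      simp
  -- basic tools
  have swap : ∀ (T : H →L[ℂ] H), IsSelfAdjoint T → ∀ x y : H,
      (inner ℂ (T x) y : ℂ) = inner ℂ x (T y) := fun T hT x y => by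
    rw [← ContinuousLinearMap.adjoint_inner_left, hT.adjoint_eq]
  have hnormsq : ∀ x : H, (inner ℂ x x : ℂ).re = ‖x‖ ^ 2 := fun x => by
    rw [← RCLike.re_to_complex, inner_self_eq_norm_sq]
  -- J is an isometry
  have hJJ : ∀ x : H, J (J x) = x := fun x => by
    rw [← ContinuousLinearMap.mul_apply, hJ2, ContinuousLinearMap.one_apply]
  have hJnorm : ∀ x : H, ‖J x‖ = ‖x‖ := by
    intro x
    have h2 : ‖J x‖ ^ 2 = ‖x‖ ^ 2 := by
      rw [← hnormsq, ← hnormsq x, swap J hJsa x (J x), hJJ]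
    nlinarith [norm_nonneg (J x), norm_nonneg x]
  -- P facts
  have hPsa : IsSelfAdjoint P := by
    rw [hP]
    rw [IsSelfAdjoint, star_smul, star_add, star_one, hJsa.star_eq]
    norm_num
  have hJP : J * P = P := by
    rw [hP, mul_smul_comm, mul_add, mul_one, hJ2, add_comm]
  have hPP : P * P = P := by
    rw [hP]
    simp only [smul_mul_assoc, mul_smul_comm, add_mul, mul_add, one_mul, mul_one, hJ2, smul_smul]
    module
  have hJQ : J * (1 - P) = -(1 - P) := by
    rw [mul_sub, mul_one, hJP, hP]
    module
  -- norm bound on R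
  have hRcontr : ∀ x : H, ‖R x‖ ≤ ‖x‖ := by
    intro x
    have h0 : 0 ≤ (inner ℂ (R x) (x - R x) : ℂ).re := by
      have := hA0 ⟨R x, hmem x⟩
      rwa [hrel x] at this
    have h1 : ‖R x‖ ^ 2 ≤ (inner ℂ (R x) x : ℂ).re := by
      rw [inner_sub_right] at h0
      have := hnormsq (R x)
      simp only [Complex.sub_re] at h0
      linarith
    have h2 : (inner ℂ (R x) x : ℂ).re ≤ ‖R x‖ * ‖x‖ := by
      calc (inner ℂ (R x) x : ℂ).re ≤ ‖(inner ℂ (R x) x : ℂ)‖ := Complex.re_le_norm _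
        _ ≤ ‖R x‖ * ‖x‖ := norm_inner_le_norm _ _
    nlinarith [norm_nonneg (R x), norm_nonneg x]
  have hRnorm : ‖R‖ ≤ 1 :=
    R.opNorm_le_bound zero_le_one (fun x => by simpa using hRcontr x)
  have hspec : spectrum ℝ R ⊆ Set.Iic 1 := by
    intro r hr
    have := spectrum.norm_le_norm_of_mem hr
    simp only [Real.norm_eq_abs] at this
    exact Set.mem_Iic.mpr <| (le_abs_self r).trans (this.trans hRnorm)
  -- D facts
  have hDsa : IsSelfAdjoint D := by
    rw [hD]; exact cfc_predicate _ R
  have hD2 : D * D = 1 - R := by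
    rw [hD, ← cfc_mul ..]
    have h : cfc (fun r : ℝ => Real.sqrt (1 - r) * Real.sqrt (1 - r)) R
        = cfc (fun r : ℝ => 1 - r) R := by
      apply cfc_congr
      intro r hr
      exact Real.mul_self_sqrt (by linarith [Set.mem_Iic.mp (hspec hr)])
    rw [h, cfc_sub .., cfc_const_one ℝ R, cfc_id' ℝ R]
  have hJD : J * D = D * J := by
    rw [hD]
    let φ : (H →L[ℂ] H) →⋆ₐ[ℂ] (H →L[ℂ] H) :=
    { toFun := fun x => J * x * J
      map_one' := by show J * 1 * J = 1; rw [mul_one, hJ2]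
      map_mul' := fun x y => by
        show J * (x * y) * J = (J * x * J) * (J * y * J)
        simp only [mul_assoc]
        rw [← mul_assoc J J, hJ2, one_mul]
      map_zero' := by show J * 0 * J = 0; simp
      map_add' := fun x y => by
        show J * (x + y) * J = J * x * J + J * y * J
        simp [mul_add, add_mul]
      commutes' := fun c => by
        show J * algebraMap ℂ (H →L[ℂ] H) c * J = algebraMap ℂ (H →L[ℂ] H) c
        rw [Algebra.algebraMap_eq_smul_one, mul_smul_comm, smul_mul_assoc, mul_one, hJ2]
      map_star' := fun x => by
        show J * star x * J = star (J * x * J)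
        simp [star_mul, hJsa.star_eq, mul_assoc] }
    have hφc : Continuous φ := by
      show Continuous fun x : H →L[ℂ] H => J * x * J
      fun_prop
    have hφR : φ R = R := by
      show J * R * J = R
      rw [hJR, mul_assoc, hJ2, mul_one]
    have hq : IsSelfAdjoint (φ R) := by rw [hφR]; exact hRsa
    have key := StarAlgHomClass.map_cfc (S := ℂ) φ (fun r : ℝ => Real.sqrt (1 - r)) R
      (by fun_prop) hφc hRsa hq
    rw [hφR] at key
    have h2 : J * (cfc (fun r : ℝ => Real.sqrt (1 - r)) R) * J
        = cfc (fun r : ℝ => Real.sqrt (1 - r)) R := key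
    calc J * (cfc (fun r : ℝ => Real.sqrt (1 - r)) R)
        = (J * (cfc (fun r : ℝ => Real.sqrt (1 - r)) R) * J) * J := by
          rw [mul_assoc _ J J, hJ2, mul_one]
      _ = _ := by rw [h2]
  have hPD : P * D = D * P := by
    rw [hP, smul_mul_assoc, mul_smul_comm, add_mul, mul_add, one_mul, mul_one, hJD]
  have hQD : (1 - P) * D = D * (1 - P) := by
    rw [sub_mul, mul_sub, one_mul, mul_one, hPD]
  have hDnorm : ∀ y : H, ‖D y‖ ^ 2 = ‖y‖ ^ 2 - (inner ℂ y (R y) : ℂ).re := by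
    intro y
    have h1 : (inner ℂ (D y) (D y) : ℂ) = inner ℂ y y - inner ℂ y (R y) := by
      rw [swap D hDsa y (D y), ← ContinuousLinearMap.mul_apply, hD2,
        ContinuousLinearMap.sub_apply, ContinuousLinearMap.one_apply, inner_sub_right]
    have := congrArg Complex.re h1
    simp only [Complex.sub_re] at this
    rw [← hnormsq, this, hnormsq]
  -- Part 1
  have part1 : ∀ x : H, α * ‖P x‖ ^ 2 ≤ (inner ℂ (P x) (tH (P x)) : ℂ).re := by
    intro x
    set u := P x with hu
    have hJu : J u = u := by
      show J (P x) = P x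
      rw [← ContinuousLinearMap.mul_apply, hJP]
    have hDu : D u = P (D x) := by
      show D (P x) = P (D x)
      rw [← ContinuousLinearMap.mul_apply, ← hPD, ContinuousLinearMap.mul_apply]
    have htHu : tH u = D (Hb (D u)) + R u := by
      rw [htH]
      simp only [ContinuousLinearMap.add_apply, ContinuousLinearMap.mul_apply, hJu]
    have hr0 : 0 ≤ (inner ℂ u (R u) : ℂ).re := hR0 u
    have hmain : (inner ℂ u (tH u) : ℂ).re
        = (inner ℂ (P (D x)) (Hb (P (D x))) : ℂ).re + (inner ℂ u (R u) : ℂ).re := by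
      rw [htHu, inner_add_right, Complex.add_re, ← swap D hDsa u (Hb (D u)), hDu]
    have hHbpart := hpos (D x)
    have hDu2 : ‖P (D x)‖ ^ 2 = ‖u‖ ^ 2 - (inner ℂ u (R u) : ℂ).re := by
      rw [← hDu, hDnorm u]
    rw [hmain]
    rw [hDu2] at hHbpart
    nlinarith [hr0]
  -- Part 2
  have part2 : ∀ x : H, (inner ℂ ((1 - P) x) (tH ((1 - P) x)) : ℂ).re
      ≤ -α * ‖(1 - P) x‖ ^ 2 := by
    intro x
    set v := (1 - P) x with hv
    have hJv : J v = -v := by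
      show J ((1 - P) x) = -((1 - P) x)
      rw [← ContinuousLinearMap.mul_apply, hJQ, ContinuousLinearMap.neg_apply]
    have hDv : D v = (1 - P) (D x) := by
      show D ((1 - P) x) = (1 - P) (D x)
      rw [← ContinuousLinearMap.mul_apply, ← hQD, ContinuousLinearMap.mul_apply]
    have htHv : tH v = D (Hb (D v)) - R v := by
      rw [htH]
      simp only [ContinuousLinearMap.add_apply, ContinuousLinearMap.mul_apply, hJv, map_neg]
      abel
    have hr0 : 0 ≤ (inner ℂ v (R v) : ℂ).re := hR0 v
    have hmain : (inner ℂ v (tH v) : ℂ).re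
        = (inner ℂ ((1 - P) (D x)) (Hb ((1 - P) (D x))) : ℂ).re - (inner ℂ v (R v) : ℂ).re := by
      rw [htHv, inner_sub_right, Complex.sub_re, ← swap D hDsa v (Hb (D v)), hDv]
    have hHbpart := hneg (D x)
    have hDv2 : ‖(1 - P) (D x)‖ ^ 2 = ‖v‖ ^ 2 - (inner ℂ v (R v) : ℂ).re := by
      rw [← hDv, hDnorm v]
    rw [hmain]
    rw [hDv2] at hHbpart
    nlinarith [hr0]
  -- self-adjointness
  have htHsa : IsSelfAdjoint tH := by
    rw [htH]
    apply IsSelfAdjoint.add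
    · show star (D * Hb * D) = D * Hb * D
      simp [star_mul, hDsa.star_eq, hHbsa.star_eq, mul_assoc]
    · show star (R * J) = R * J
      rw [star_mul, hJsa.star_eq, hRsa.star_eq, hJR]
  -- coercivity
  have key : ∀ x : H, α * ‖x‖ ^ 2 ≤ (inner ℂ (J x) (tH x) : ℂ).re := by
    intro x
    set a := P x with ha
    set b := (1 - P) x with hb
    have hx : x = a + b := by
      show x = P x + (1 - P) x
      simp [ContinuousLinearMap.sub_apply]
    have hJx : J x = a - b := by
      conv_lhs => rw [hx]
      rw [map_add]
      have h1 : J a = a := by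
        show J (P x) = P x
        rw [← ContinuousLinearMap.mul_apply, hJP]
      have h2 : J b = -b := by
        show J ((1 - P) x) = -((1 - P) x)
        rw [← ContinuousLinearMap.mul_apply, hJQ, ContinuousLinearMap.neg_apply]
      rw [h1, h2]
      abel
    have htHx : tH x = tH a + tH b := by rw [hx, map_add]
    have cancel : (inner ℂ b (tH a) : ℂ).re = (inner ℂ a (tH b) : ℂ).re := by
      rw [← swap tH htHsa b a, ← inner_conj_symm, Complex.conj_re]
    have hab : (inner ℂ a b : ℂ) = 0 := by
      rw [swap P hPsa x ((1 - P) x)]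
      have : P ((1 - P) x) = 0 := by
        rw [← ContinuousLinearMap.mul_apply, mul_sub, mul_one, hPP, sub_self,
          ContinuousLinearMap.zero_apply]
      rw [this, inner_zero_right]
    have pythag : ‖x‖ ^ 2 = ‖a‖ ^ 2 + ‖b‖ ^ 2 := by
      rw [hx, norm_add_sq (𝕜 := ℂ), hab]
      simp
    have expand : (inner ℂ (J x) (tH x) : ℂ).re
        = (inner ℂ a (tH a) : ℂ).re - (inner ℂ b (tH b) : ℂ).re := by
      rw [hJx, htHx, inner_sub_left, inner_add_right, inner_add_right]
      simp only [Complex.sub_re, Complex.add_re]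
      rw [cancel]
      ring
    rw [expand, pythag]
    have h1 := part1 x
    have h2 := part2 x
    rw [← ha] at h1
    rw [← hb] at h2
    nlinarith
  have lower : ∀ x : H, α * ‖x‖ ≤ ‖tH x‖ := by
    intro x
    rcases eq_or_ne x 0 with rfl | hx0
    · simp
    have hxpos : 0 < ‖x‖ := norm_pos_iff.mpr hx0
    have h1 : α * ‖x‖ ^ 2 ≤ ‖x‖ * ‖tH x‖ := by
      calc α * ‖x‖ ^ 2 ≤ (inner ℂ (J x) (tH x) : ℂ).re := key x
        _ ≤ ‖(inner ℂ (J x) (tH x) : ℂ)‖ := Complex.re_le_norm _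
        _ ≤ ‖J x‖ * ‖tH x‖ := norm_inner_le_norm _ _
        _ = ‖x‖ * ‖tH x‖ := by rw [hJnorm]
    nlinarith
  have hker : LinearMap.ker (tH : H →ₗ[ℂ] H) = ⊥ := by
    rw [LinearMap.ker_eq_bot']
    intro x hx
    have := lower x
    have hx : tH x = 0 := hx
    rw [hx, norm_zero] at this
    have : ‖x‖ ≤ 0 := by nlinarith
    exact norm_le_zero_iff.mp this
  have hanti : AntilipschitzWith (⟨α, hα0.le⟩ : NNReal)⁻¹ tH := by
    apply tH.antilipschitz_of_bound
    intro x
    have h := lower x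
    show ‖x‖ ≤ α⁻¹ * ‖tH x‖
    calc ‖x‖ = α⁻¹ * (α * ‖x‖) := by field_simp
      _ ≤ α⁻¹ * ‖tH x‖ := by
        apply mul_le_mul_of_nonneg_left h (inv_nonneg.mpr hα0.le)
  have hrange : LinearMap.range (tH : H →ₗ[ℂ] H) = ⊤ := by
    haveI := hanti.completeSpace_range_clm
    rw [← Submodule.orthogonal_eq_bot_iff]
    rw [Submodule.eq_bot_iff]
    intro y hy
    have hy' : ∀ x : H, (inner ℂ (tH x) y : ℂ) = 0 := fun x =>
      (Submodule.mem_orthogonal _ y).mp hy (tH x) (LinearMap.mem_range_self _ x)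
    have hall : ∀ x : H, (inner ℂ x (tH y) : ℂ) = 0 := fun x => by
      rw [← swap tH htHsa x y]; exact hy' x
    have h0 : tH y = 0 := inner_self_eq_zero.mp (hall (tH y))
    have := lower y
    rw [h0, norm_zero] at this
    have hy0 : y = 0 := norm_le_zero_iff.mp (by nlinarith)
    simp [hy0]
  let e := ContinuousLinearEquiv.ofBijective tH hker hrange
  have he : ∀ z : H, e z = tH z := fun z => by
    rw [ContinuousLinearEquiv.coeFn_ofBijective]
  refine ⟨part1, part2, htHsa, e.symm.toContinuousLinearMap, ?_, ?_⟩
  · ext x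
    show e.symm (tH x) = x
    rw [← he x]
    exact e.symm_apply_apply x
  · ext x
    show tH (e.symm x) = x
    rw [← he (e.symm x)]
    exact e.apply_symm_apply x
end
end

section
/- Under the off-diagonal Hypothesis, the form v admits the representation v[x,y] = ⟨S(A+I)^{1/2}x, (A+I)^{1/2}y⟩ for x, y ∈ dom(A^{1/2}), where S is a bounded operator with ‖S‖ ≤ β, and S is off-diagonal with respect to H = H₊ ⊕ H₋, i.e. S = [[0, T],[T*, 0]] with T = P_A S P_A^⊥. -/
noncomputable section

open scoped ComplexOrder

variable {H : Type*} [NormedAddCommGroup H] [InnerProductSpace ℂ H] [CompleteSpace H]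

set_option maxHeartbeats 1000000 in
/-- Under the off-diagonal hypothesis, the form `v` admits the representation
`v[x,y] = ⟨S (A+1)^{1/2} x, (A+1)^{1/2} y⟩` on `dom A^{1/2}`, where `S` is a bounded operator
with `‖S‖ ≤ β`, and `S` is off-diagonal w.r.t. `H = H₊ ⊕ H₋`, i.e. `S = P S P⊥ + P⊥ S P`.
Here `sqrtA1` is the non-negative self-adjoint square root of `A + 1`. -/
theorem stmt14 (J : H →L[ℂ] H) (hJsa : IsSelfAdjoint J) (hJ2 : J * J = 1)
    (A : H →ₗ.[ℂ] H) (hAsa : PMapSelfAdj A) (hA0 : PMapNonneg A)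
    (hJA : ∀ x : A.domain, ∃ h : J (x : H) ∈ A.domain, A ⟨J (x : H), h⟩ = J (A x))
    (sqrtA1 : H →ₗ.[ℂ] H) (hsq1sa : PMapSelfAdj sqrtA1) (hsq10 : PMapNonneg sqrtA1)
    (hsq1 : PMapCompEq sqrtA1 sqrtA1 ⟨A.domain, A.toFun + A.domain.subtype⟩)
    (hJsq1 : ∀ x : sqrtA1.domain, ∃ h : J (x : H) ∈ sqrtA1.domain,
      sqrtA1 ⟨J (x : H), h⟩ = J (sqrtA1 x))
    (v : H → H → ℂ) (Dv : Set H) (hDv : (sqrtA1.domain : Set H) ⊆ Dv)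
    (hv_symm : ∀ x y : H, v x y = (starRingEnd ℂ) (v y x))
    (hv_add : ∀ x y z : H, v x (y + z) = v x y + v x z)
    (hv_smul : ∀ (t : ℂ) (x y : H), v x (t • y) = t * v x y)
    (β : ℝ) (hβ : 0 ≤ β)
    (hv_bd : ∀ x : sqrtA1.domain, ‖v x x‖ ≤ β * ‖sqrtA1 x‖ ^ 2)
    (hv_off : ∀ x y : sqrtA1.domain, v (J (x : H)) (y : H) = -v (x : H) (J (y : H)))
    (P : H →L[ℂ] H) (hP : P = (2⁻¹ : ℂ) • (1 + J)) :
    ∃ S : H →L[ℂ] H, ‖S‖ ≤ β ∧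
      (∀ x y : sqrtA1.domain, v (x : H) (y : H) = inner ℂ (S (sqrtA1 x)) (sqrtA1 y)) ∧
      S = P * S * (1 - P) + (1 - P) * S * P := by
  classical
  set D := sqrtA1.domain with hD
  set Tl : D →ₗ[ℂ] H := sqrtA1.toFun with hTl
  -- injectivity of sqrtA1
  have hinj : Function.Injective Tl := by
    rw [injective_iff_map_eq_zero]
    intro x hx
    have hmemA : (x : H) ∈ A.domain := by
      refine hsq1.2 x ?_
      rw [show sqrtA1 x = Tl x from rfl, hx]; exact zero_mem _
    obtain ⟨hx1, hx2, heq⟩ := hsq1.1 ⟨(x : H), hmemA⟩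
    set x' : D := ⟨((⟨(x : H), hmemA⟩ : A.domain) : H), hx1⟩ with hx'
    have hx'x : x' = x := Subtype.ext rfl
    have hval : sqrtA1 x' = 0 := by rw [hx'x]; exact hx
    have hz : (⟨sqrtA1 x', hx2⟩ : D) = 0 := Subtype.ext (by simpa using hval)
    rw [hz] at heq
    have heq2 : A.toFun ⟨(x : H), hmemA⟩ + (x : H) = 0 := by
      simpa [LinearPMap.mk_apply, LinearMap.add_apply, LinearPMap.map_zero] using heq
    have h1 : (inner ℂ (x : H) (A.toFun ⟨(x : H), hmemA⟩ + (x : H)) : ℂ) = 0 := by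
      rw [heq2, inner_zero_right]
    rw [inner_add_right] at h1
    have h2 : (inner ℂ (x : H) (A.toFun ⟨(x : H), hmemA⟩) : ℂ).re + ‖(x : H)‖ ^ 2 = 0 := by
      have := congrArg Complex.re h1
      have h5' : (inner ℂ (x : H) (x : H) : ℂ).re = ‖(x : H)‖ ^ 2 :=
        inner_self_eq_norm_sq (𝕜 := ℂ) (x : H)
      rw [Complex.add_re, h5', Complex.zero_re] at this
      exact this
    have h3 : 0 ≤ (inner ℂ ((x : H)) (A.toFun ⟨(x : H), hmemA⟩) : ℂ).re := hA0 ⟨(x : H), hmemA⟩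
    have h4 : ‖(x : H)‖ ^ 2 = 0 := le_antisymm (by nlinarith) (sq_nonneg _)
    have h5 : (x : H) = 0 := norm_eq_zero.mp (by
      have := sq_eq_zero_iff.mp h4; exact this)
    exact Subtype.ext h5
  -- linearity facts
  have hv_zr : ∀ x : H, v x 0 = 0 := by
    intro x
    have := hv_smul 0 x 0
    simpa using this
  have hv_zl : ∀ y : H, v 0 y = 0 := by
    intro y; rw [hv_symm, hv_zr]; simp
  have hv_addl : ∀ x y z : H, v (x + y) z = v x z + v y z := by
    intro x y z
    rw [hv_symm, hv_add, map_add, ← hv_symm, ← hv_symm]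
  have hv_smull : ∀ (t : ℂ) (x y : H), v (t • x) y = (starRingEnd ℂ) t * v x y := by
    intro t x y
    rw [hv_symm, hv_smul, map_mul, ← hv_symm]
  have hv_negr : ∀ x y : H, v x (-y) = -v x y := by
    intro x y
    have := hv_smul (-1) x y
    simpa using this
  -- polarization bound, unscaled
  have hbd2 : ∀ x y : D, ‖v x y‖ ≤ β / 2 * (‖Tl x‖ ^ 2 + ‖Tl y‖ ^ 2) := by
    intro x y
    by_cases hxy : v (x : H) (y : H) = 0
    · rw [hxy]; simp; positivity
    set a : ℂ := v (x : H) (y : H) with ha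
    set c : ℂ := (starRingEnd ℂ) a / (‖a‖ : ℂ) with hc
    have habs : (‖a‖ : ℝ) ≠ 0 := by
      simpa using hxy
    have hcabs : ‖c‖ = 1 := by
      rw [hc, norm_div]
      simp [habs]
    set y' : D := c • y with hy'
    have hy'c : (y' : H) = c • (y : H) := rfl
    have hvxy' : v (x : H) (y' : H) = (‖a‖ : ℂ) := by
      rw [hy'c, hv_smul, hc]
      have hne : ((‖a‖ : ℝ) : ℂ) ≠ 0 := by exact_mod_cast habs
      rw [div_mul_eq_mul_div, Complex.conj_mul', pow_two, mul_div_assoc, div_self hne, mul_one]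
    have hvy'x : v (y' : H) (x : H) = (‖a‖ : ℂ) := by
      rw [hv_symm, hvxy']
      simp [Complex.conj_ofReal]
    have hv_negl : ∀ x y : H, v (-x) y = -v x y := by
      intro x y
      rw [hv_symm, hv_negr, map_neg, ← hv_symm]
    have expand : ∀ p q : H, v (p + q) (p + q) = v p p + v p q + (v q p + v q q) := by
      intro p q; rw [hv_add, hv_addl, hv_addl]; ring
    have e1 : v ((x : H) + (y' : H)) ((x : H) + (y' : H))
        = v x x + v x y' + (v y' x + v y' y') := expand _ _
    have e2 : v ((x : H) - (y' : H)) ((x : H) - (y' : H))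
        = v x x - v x y' - v y' x + v y' y' := by
      rw [sub_eq_add_neg, expand, hv_negr, hv_negl, hv_negl, hv_negr, neg_neg]; ring
    have ediff : v ((x : H) + (y' : H)) ((x : H) + (y' : H))
        - v ((x : H) - (y' : H)) ((x : H) - (y' : H)) = ((4 * ‖a‖ : ℝ) : ℂ) := by
      rw [e1, e2, hvxy', hvy'x]; push_cast; ring
    -- bounds on the two diagonal terms
    have hplus := hv_bd (x + y')
    have hminus := hv_bd (x - y')
    have hTplus : ‖sqrtA1 (x + y')‖ = ‖Tl x + Tl y'‖ := by
      congr 1; exact map_add _ _ _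
    have hTminus : ‖sqrtA1 (x - y')‖ = ‖Tl x - Tl y'‖ := by
      congr 1; exact map_sub _ _ _
    have hcoe_p : ((x + y' : D) : H) = (x : H) + (y' : H) := rfl
    have hcoe_m : ((x - y' : D) : H) = (x : H) - (y' : H) := rfl
    rw [hcoe_p, hTplus] at hplus
    rw [hcoe_m, hTminus] at hminus
    have hpar : ‖Tl x + Tl y'‖ ^ 2 + ‖Tl x - Tl y'‖ ^ 2 = 2 * (‖Tl x‖ ^ 2 + ‖Tl y'‖ ^ 2) := by
      have := parallelogram_law_with_norm ℂ (Tl x) (Tl y')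
      nlinarith [this]
    have hny' : ‖Tl y'‖ = ‖Tl y‖ := by
      have : Tl y' = c • Tl y := map_smul _ _ _
      rw [this, norm_smul]
      simp [hcabs]
    have hre : 4 * ‖a‖
        ≤ ‖v ((x : H) + (y' : H)) ((x : H) + (y' : H))‖
          + ‖v ((x : H) - (y' : H)) ((x : H) - (y' : H))‖ := by
      have h1 : (4 * ‖a‖ : ℝ)
          = (v ((x : H) + (y' : H)) ((x : H) + (y' : H))
            - v ((x : H) - (y' : H)) ((x : H) - (y' : H))).re := by
        rw [ediff]; simp
      rw [h1]
      calc (v ((x : H) + (y' : H)) ((x : H) + (y' : H))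
            - v ((x : H) - (y' : H)) ((x : H) - (y' : H))).re
          ≤ ‖v ((x : H) + (y' : H)) ((x : H) + (y' : H))
            - v ((x : H) - (y' : H)) ((x : H) - (y' : H))‖ := Complex.re_le_norm _
        _ ≤ _ := by
            exact (norm_sub_le _ _)
    have : 4 * ‖a‖ ≤ β * (2 * (‖Tl x‖ ^ 2 + ‖Tl y‖ ^ 2)) := by
      calc 4 * ‖a‖ ≤ _ := hre
        _ ≤ β * ‖Tl x + Tl y'‖ ^ 2 + β * ‖Tl x - Tl y'‖ ^ 2 := add_le_add hplus hminus
        _ = β * (‖Tl x + Tl y'‖ ^ 2 + ‖Tl x - Tl y'‖ ^ 2) := by ring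
        _ = β * (2 * (‖Tl x‖ ^ 2 + ‖Tl y'‖ ^ 2)) := by rw [hpar]
        _ = β * (2 * (‖Tl x‖ ^ 2 + ‖Tl y‖ ^ 2)) := by rw [hny']
    linarith
  -- the sesquilinear bound
  have hbd : ∀ x y : D, ‖v x y‖ ≤ β * (‖Tl x‖ * ‖Tl y‖) := by
    intro x y
    rcases eq_or_ne (Tl x) 0 with hx0 | hx0
    · have : x = 0 := hinj (by simpa using hx0)
      rw [this]
      have : ((0 : D) : H) = 0 := rfl
      rw [this, hv_zl]
      simp
    rcases eq_or_ne (Tl y) 0 with hy0 | hy0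
    · have : y = 0 := hinj (by simpa using hy0)
      rw [this]
      have h0 : ((0 : D) : H) = 0 := rfl
      rw [h0, hv_zr]
      simp
    have ha : (0:ℝ) < ‖Tl x‖ := norm_pos_iff.mpr hx0
    have hb : (0:ℝ) < ‖Tl y‖ := norm_pos_iff.mpr hy0
    set t : ℝ := Real.sqrt (‖Tl y‖ / ‖Tl x‖) with ht
    have htpos : 0 < t := Real.sqrt_pos.mpr (by positivity)
    have ht2 : t ^ 2 = ‖Tl y‖ / ‖Tl x‖ := Real.sq_sqrt (by positivity)
    set x2 : D := ((t : ℂ)) • x with hx2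
    set y2 : D := (((t⁻¹ : ℝ) : ℂ)) • y with hy2
    have hveq : v (x2 : H) (y2 : H) = v (x : H) (y : H) := by
      have hcx : (x2 : H) = (t : ℂ) • (x : H) := rfl
      have hcy : (y2 : H) = ((t⁻¹ : ℝ) : ℂ) • (y : H) := rfl
      rw [hcx, hcy, hv_smull, hv_smul, Complex.conj_ofReal]
      rw [← mul_assoc, ← Complex.ofReal_mul, mul_inv_cancel₀ (ne_of_gt htpos)]
      simp
    have hnx2 : ‖Tl x2‖ = t * ‖Tl x‖ := by
      have : Tl x2 = (t : ℂ) • Tl x := map_smul _ _ _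
      rw [this, norm_smul]
      simp [abs_of_pos htpos]
    have hny2 : ‖Tl y2‖ = t⁻¹ * ‖Tl y‖ := by
      have : Tl y2 = ((t⁻¹ : ℝ) : ℂ) • Tl y := map_smul _ _ _
      rw [this, norm_smul]
      simp [abs_of_pos (inv_pos.mpr htpos), htpos.le]
    have key := hbd2 x2 y2
    rw [hveq, hnx2, hny2] at key
    have hsimp : (t * ‖Tl x‖) ^ 2 + (t⁻¹ * ‖Tl y‖) ^ 2 = 2 * (‖Tl x‖ * ‖Tl y‖) := by
      have hti2 : (t⁻¹) ^ 2 = ‖Tl x‖ / ‖Tl y‖ := by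
        rw [inv_pow, ht2]
        rw [inv_div]
      field_simp [mul_pow, ht2, hti2] at *
      nlinarith [ht2, sq_nonneg t]
    rw [hsimp] at key
    linarith
  -- range and closure
  set R : Submodule ℂ H := LinearMap.range Tl with hRdef
  set K : Submodule ℂ H := R.topologicalClosure with hKdef
  have hRK : R ≤ K := Submodule.le_topologicalClosure R
  set e' : D ≃ₗ[ℂ] R := LinearEquiv.ofInjective Tl hinj with he'def
  have he'_coe : ∀ x : D, ((e' x : R) : H) = Tl x := fun x => rfl
  have hTe : ∀ u : R, Tl (e'.symm u) = (u : H) := by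
    intro u
    conv_rhs => rw [← e'.apply_symm_apply u]
    exact (he'_coe _).symm
  -- the continuous inclusion R → K
  set eL : R →L[ℂ] K := LinearMap.mkContinuous (Submodule.inclusion hRK) 1
    (fun u => by rw [one_mul]; rfl) with heLdef
  have heL_coe : ∀ u : R, ((eL u : K) : H) = (u : H) := fun u => rfl
  have hisom : Isometry eL := AddMonoidHomClass.isometry_of_norm _ (fun u => rfl)
  have hui : IsUniformInducing eL := hisom.isUniformInducing
  have hdense : DenseRange eL := by
    intro k
    rw [closure_subtype]
    have himg : (Subtype.val '' Set.range eL) = (R : Set H) := by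
      ext z
      constructor
      · rintro ⟨u, ⟨w, rfl⟩, rfl⟩; exact w.2
      · intro hz; exact ⟨eL ⟨z, hz⟩, ⟨⟨z, hz⟩, rfl⟩, rfl⟩
    rw [himg]
    exact k.2
  -- the sesquilinear form transported to R, as a family of functionals
  have hb1 : ∀ u w : R, ‖v ((e'.symm u : D) : H) ((e'.symm w : D) : H)‖ ≤ β * ‖u‖ * ‖w‖ := by
    intro u w
    have := hbd (e'.symm u) (e'.symm w)
    rw [hTe, hTe] at this
    calc ‖v ((e'.symm u : D) : H) ((e'.symm w : D) : H)‖
        = ‖v ((e'.symm u : D) : H) ((e'.symm w : D) : H)‖ :=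
          rfl
      _ ≤ β * (‖(u : H)‖ * ‖(w : H)‖) := this
      _ = β * ‖(u : H)‖ * ‖(w : H)‖ := by rw [mul_assoc]
      _ = β * ‖u‖ * ‖w‖ := rfl
  set vlin : H → (H →ₗ[ℂ] ℂ) := fun x =>
    { toFun := v x, map_add' := hv_add x,
      map_smul' := fun c y => by simpa using hv_smul c x y } with hvlindef
  set gC : R → (R →L[ℂ] ℂ) := fun u => LinearMap.mkContinuous
    ((vlin ((e'.symm u : D) : H)).comp (D.subtype.comp (e'.symm : R →ₗ[ℂ] D)))
    (β * ‖u‖) (fun w => hb1 u w) with hgCdef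
  have hgC_apply : ∀ u w : R, gC u w = v ((e'.symm u : D) : H) ((e'.symm w : D) : H) :=
    fun u w => rfl
  have hgC_norm : ∀ u : R, ‖gC u‖ ≤ β * ‖u‖ :=
    fun u => LinearMap.mkContinuous_norm_le _ (by positivity) _
  -- extend each functional to K and apply Riesz
  set φ : R → (K →L[ℂ] ℂ) := fun u => (gC u).extend eL with hφdef
  set sVec : R → K := fun u => (InnerProductSpace.toDual ℂ K).symm (φ u) with hsVecdef
  have hsVec : ∀ u w : R,
      (inner ℂ ((sVec u : K) : H) ((w : R) : H) : ℂ)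
        = v ((e'.symm u : D) : H) ((e'.symm w : D) : H) := by
    intro u w
    have h1 : (inner ℂ (sVec u) (eL w) : ℂ) = φ u (eL w) :=
      InnerProductSpace.toDual_symm_apply
    have h2 : φ u (eL w) = gC u w := ContinuousLinearMap.extend_eq _ hdense hui w
    have h3 : (inner ℂ (sVec u) (eL w) : ℂ) = inner ℂ ((sVec u : K) : H) ((eL w : K) : H) :=
      Submodule.coe_inner _ _ _
    rw [← heL_coe w, ← h3, h1, h2, hgC_apply]
  -- vanishing test against R
  have hKzero : ∀ k : K, (∀ w : R, (inner ℂ ((k : K) : H) ((w : R) : H) : ℂ) = 0) → k = 0 := by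
    intro k hk
    have hker : K ≤ LinearMap.ker (innerSL ℂ ((k : K) : H) : H →ₗ[ℂ] ℂ) := by
      apply Submodule.topologicalClosure_minimal
      · intro z hz
        rw [LinearMap.mem_ker]
        exact hk ⟨z, hz⟩
      · exact ContinuousLinearMap.isClosed_ker _
    have h0 : (inner ℂ ((k : K) : H) ((k : K) : H) : ℂ) = 0 := hker k.2
    have : ((k : K) : H) = 0 := inner_self_eq_zero.mp h0
    exact Subtype.ext this
  have hKext : ∀ k₁ k₂ : K,
      (∀ w : R, (inner ℂ ((k₁ : K) : H) ((w : R) : H) : ℂ)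
        = inner ℂ ((k₂ : K) : H) ((w : R) : H)) → k₁ = k₂ := by
    intro k₁ k₂ hk
    have := hKzero (k₁ - k₂) (fun w => by
      rw [show (((k₁ - k₂ : K) : H)) = ((k₁ : K) : H) - ((k₂ : K) : H) from rfl,
        inner_sub_left, hk w, sub_self])
    exact sub_eq_zero.mp this
  -- linearity of sVec
  have hadd : ∀ u w : R, sVec (u + w) = sVec u + sVec w := by
    intro u w
    apply hKext
    intro w'
    rw [show (((sVec u + sVec w : K) : H)) = ((sVec u : K) : H) + ((sVec w : K) : H) from rfl,
      inner_add_left, hsVec, hsVec, hsVec, map_add e'.symm, Submodule.coe_add, hv_addl]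
  have hsmul : ∀ (c : ℂ) (u : R), sVec (c • u) = c • sVec u := by
    intro c u
    apply hKext
    intro w'
    rw [show (((c • sVec u : K) : H)) = c • ((sVec u : K) : H) from rfl,
      inner_smul_left, hsVec, hsVec, map_smul e'.symm, Submodule.coe_smul, hv_smull]
  have hsVec_norm : ∀ u : R, ‖sVec u‖ ≤ β * ‖u‖ := by
    intro u
    have h1 : ‖sVec u‖ = ‖φ u‖ := LinearIsometryEquiv.norm_map _ _
    have h2 : ‖φ u‖ ≤ ((1 : NNReal) : ℝ) * ‖gC u‖ :=
      ContinuousLinearMap.opNorm_extend_le (gC u) hdense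
        (fun w => by rw [NNReal.coe_one, one_mul]; exact le_of_eq rfl)
    rw [h1]
    calc ‖φ u‖ ≤ ((1 : NNReal) : ℝ) * ‖gC u‖ := h2
      _ = ‖gC u‖ := by norm_num
      _ ≤ β * ‖u‖ := hgC_norm u
  set S1 : R →L[ℂ] K := LinearMap.mkContinuous
    { toFun := sVec, map_add' := hadd, map_smul' := hsmul } β (fun u => hsVec_norm u)
    with hS1def
  have hS1_apply : ∀ u : R, S1 u = sVec u := fun u => rfl
  have hS1_norm : ‖S1‖ ≤ β := LinearMap.mkContinuous_norm_le _ hβ _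
  set Sbar : K →L[ℂ] K := S1.extend eL with hSbardef
  have hSbar_e : ∀ u : R, Sbar (eL u) = sVec u :=
    fun u => ContinuousLinearMap.extend_eq _ hdense hui u
  have hSbar_norm : ‖Sbar‖ ≤ β := by
    have h2 : ‖Sbar‖ ≤ ((1 : NNReal) : ℝ) * ‖S1‖ :=
      ContinuousLinearMap.opNorm_extend_le S1 hdense
        (fun w => by rw [NNReal.coe_one, one_mul]; exact le_of_eq rfl)
    calc ‖Sbar‖ ≤ ((1 : NNReal) : ℝ) * ‖S1‖ := h2
      _ = ‖S1‖ := by norm_num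
      _ ≤ β := hS1_norm
  set S : H →L[ℂ] H := K.subtypeL.comp (Sbar.comp (K.orthogonalProjectionOnto)) with hSdef
  have hS_apply : ∀ z : H, S z = ((Sbar (K.orthogonalProjectionOnto z) : K) : H) := fun z => rfl
  refine ⟨S, ?_, ?_, ?_⟩
  · -- norm bound
    apply ContinuousLinearMap.opNorm_le_bound _ hβ
    intro z
    rw [hS_apply]
    calc ‖((Sbar (K.orthogonalProjectionOnto z) : K) : H)‖
        = ‖Sbar (K.orthogonalProjectionOnto z)‖ := rfl
      _ ≤ ‖Sbar‖ * ‖K.orthogonalProjectionOnto z‖ := ContinuousLinearMap.le_opNorm _ _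
      _ ≤ β * ‖z‖ := by
          apply mul_le_mul hSbar_norm ?_ (norm_nonneg _) hβ
          calc ‖K.orthogonalProjectionOnto z‖
              ≤ ‖K.orthogonalProjectionOnto‖ * ‖z‖ := ContinuousLinearMap.le_opNorm _ _
            _ ≤ 1 * ‖z‖ := by
                apply mul_le_mul_of_nonneg_right (Submodule.orthogonalProjectionOnto_norm_le K) (norm_nonneg _)
            _ = ‖z‖ := one_mul _
  · -- representation
    intro x y
    have hmemK : ∀ x : D, Tl x ∈ K := fun x => hRK (LinearMap.mem_range_self Tl x)
    have hproj : ∀ x : D, K.orthogonalProjectionOnto (Tl x) = eL (e' x) := by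
      intro x
      have h1 : K.orthogonalProjectionOnto (((⟨Tl x, hmemK x⟩ : K) : K) : H) = ⟨Tl x, hmemK x⟩ :=
        Submodule.orthogonalProjectionOnto_mem_subspace_eq_self _
      have h2 : eL (e' x) = ⟨Tl x, hmemK x⟩ := Subtype.ext rfl
      rw [h2]
      exact h1
    have hS_T : S (Tl x) = ((sVec (e' x) : K) : H) := by
      rw [hS_apply, hproj, hSbar_e]
    have hrepr : (inner ℂ (S (Tl x)) (Tl y) : ℂ) = v (x : H) (y : H) := by
      rw [hS_T]
      have := hsVec (e' x) (e' y)
      rw [he'_coe y] at this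
      rw [this, e'.symm_apply_apply, e'.symm_apply_apply]
    exact hrepr.symm
  · -- off-diagonal structure
    have hJsym : ∀ a b : H, (inner ℂ (J a) b : ℂ) = inner ℂ a (J b) := fun a b =>
      hJsa.isSymmetric a b
    have hmemRJ : ∀ x : D, ∃ x' : D, Tl x' = J (Tl x) := by
      intro x
      obtain ⟨h, he⟩ := hJsq1 x
      exact ⟨⟨J (x : H), h⟩, he⟩
    have hJR : ∀ z ∈ R, J z ∈ R := by
      rintro z ⟨x, rfl⟩
      obtain ⟨x', hx'⟩ := hmemRJ x
      exact ⟨x', hx'⟩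
    have hJK : ∀ z ∈ K, J z ∈ K := by
      intro z hz
      have hmapsto : Set.MapsTo J (R : Set H) (R : Set H) := fun w hw => hJR w hw
      have := hmapsto.closure J.continuous
      exact this hz
    have hprojJ : ∀ z : H, ((K.orthogonalProjectionOnto (J z) : K) : H)
        = J ((K.orthogonalProjectionOnto z : K) : H) := by
      intro z
      rw [← Submodule.starProjection_apply]
      apply Submodule.eq_starProjection_of_mem_of_inner_eq_zero
      · exact hJK _ (K.orthogonalProjectionOnto z).2
      · intro w hw
        rw [← map_sub J]
        rw [hJsym]
        have h2 : z - ((K.orthogonalProjectionOnto z : K) : H) ∈ Kᗮ :=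
          Submodule.sub_starProjection_mem_orthogonal (K := K) z
        exact (Submodule.mem_orthogonal' _ _).1 h2 (J w) (hJK w hw)
    -- key intertwining at the level of sVec
    have hkey : ∀ u : R, ((Sbar ⟨J ((eL u : K) : H), hJK _ (eL u).2⟩ : K) : H)
        = -(J ((Sbar (eL u) : K) : H)) := by
      intro u
      set x : D := e'.symm u with hxdef
      obtain ⟨hmem, hval⟩ := hJsq1 x
      set x' : D := ⟨J (x : H), hmem⟩ with hx'def
      have hTx' : Tl x' = J (Tl x) := hval
      have hTx : Tl x = (u : H) := hTe u
      have harg : (⟨J ((eL u : K) : H), hJK _ (eL u).2⟩ : K) = eL (e' x') := by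
        apply Subtype.ext
        show J ((eL u : K) : H) = ((eL (e' x') : K) : H)
        rw [heL_coe, heL_coe, he'_coe, hTx', hTx]
      rw [harg, hSbar_e, hSbar_e]
      -- now show ↑(sVec (e' x')) = -(J ↑(sVec u))
      have hmemJ : J ((sVec u : K) : H) ∈ K := hJK _ (sVec u).2
      have hgoal : sVec (e' x') = -(⟨J ((sVec u : K) : H), hmemJ⟩ : K) := by
        apply hKext
        intro w
        set y : D := e'.symm w with hydef
        obtain ⟨hmemy, hvaly⟩ := hJsq1 y
        set y' : D := ⟨J (y : H), hmemy⟩ with hy'def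
        have hTy' : Tl y' = J (Tl y) := hvaly
        have hTy : Tl y = (w : H) := hTe w
        have hlhs : (inner ℂ ((sVec (e' x') : K) : H) ((w : R) : H) : ℂ)
            = v ((x' : D) : H) ((y : D) : H) := by
          rw [hsVec, e'.symm_apply_apply]
        have hx'c : ((x' : D) : H) = J ((x : D) : H) := rfl
        have hoff := hv_off x y
        have hrhs : (inner ℂ ((-(⟨J ((sVec u : K) : H), hmemJ⟩ : K) : K) : H) ((w : R) : H) : ℂ)
            = -(inner ℂ ((sVec u : K) : H) (J ((w : R) : H)) : ℂ) := by
          rw [show ((-(⟨J ((sVec u : K) : H), hmemJ⟩ : K) : K) : H)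
              = -(J ((sVec u : K) : H)) from rfl]
          rw [inner_neg_left, hJsym]
        rw [hlhs, hrhs]
        have hJw : J ((w : R) : H) = ((e' y' : R) : H) := by
          rw [he'_coe, hTy', hTy]
        rw [hJw]
        have h5 : (inner ℂ ((sVec u : K) : H) ((e' y' : R) : H) : ℂ)
            = v ((x : D) : H) ((y' : D) : H) := by
          have := hsVec u (e' y')
          rw [e'.symm_apply_apply] at this
          rw [this]
        rw [h5]
        rw [hx'c, hoff]
      rw [hgoal]
      rfl
    -- globalize by density
    set f : K → H := fun k => ((Sbar ⟨J ((k : K) : H), hJK _ k.2⟩ : K) : H) with hfdef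
    set g : K → H := fun k => -(J ((Sbar k : K) : H)) with hgdef
    have hfcont : Continuous f := by
      apply Continuous.comp continuous_subtype_val
      apply Sbar.continuous.comp
      apply Continuous.subtype_mk
      exact J.continuous.comp continuous_subtype_val
    have hgcont : Continuous g := by
      apply Continuous.neg
      exact J.continuous.comp (continuous_subtype_val.comp Sbar.continuous)
    have hfg : f = g := by
      apply Continuous.ext_on hdense hfcont hgcont
      rintro k ⟨u, rfl⟩
      exact hkey u
    have hSJ : ∀ z : H, S (J z) = -(J (S z)) := by
      intro z
      have h1 : K.orthogonalProjectionOnto (J z)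
          = ⟨J ((K.orthogonalProjectionOnto z : K) : H), hJK _ (K.orthogonalProjectionOnto z).2⟩ :=
        Subtype.ext (hprojJ z)
      rw [hS_apply, hS_apply, h1]
      exact congrFun hfg (K.orthogonalProjectionOnto z)
    have hc : S * J = -(J * S) := by
      ext z
      have := hSJ z
      simpa using this
    have hJSJ : J * S * J = -S := by
      calc J * S * J = J * (S * J) := mul_assoc _ _ _
        _ = -(J * (J * S)) := by rw [hc, mul_neg]
        _ = -S := by rw [← mul_assoc, hJ2, one_mul]
    have h1 : P * S = (2⁻¹ : ℂ) • (S + J * S) := by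
      rw [hP, smul_mul_assoc, add_mul, one_mul]
    have h2 : S * P = (2⁻¹ : ℂ) • (S - J * S) := by
      rw [hP, mul_smul_comm, mul_add, mul_one, hc, ← sub_eq_add_neg]
    have h3 : P * S * P = 0 := by
      rw [hP, smul_mul_assoc, smul_mul_assoc, mul_smul_comm]
      have hz : (1 + J) * S * (1 + J) = 0 := by
        have hexp : (1 + J) * S * (1 + J) = S + S * J + (J * S + J * S * J) := by
          noncomm_ring
        rw [hexp, hc, hJSJ]
        abel
      rw [hz, smul_zero, smul_zero]
    have hfinal : P * S * (1 - P) + (1 - P) * S * P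
        = P * S + S * P - (P * S * P + P * S * P) := by noncomm_ring
    rw [hfinal, h3, h1, h2]
    have hsum : (2⁻¹ : ℂ) • (S + J * S) + (2⁻¹ : ℂ) • (S - J * S) = S := by
      rw [← smul_add]
      have h4 : (S + J * S) + (S - J * S) = (2 : ℂ) • S := by
        have h2S : (2 : ℂ) • S = S + S := two_smul ℂ S
        rw [h2S]; abel
      rw [h4, smul_smul]
      norm_num
    rw [add_zero, sub_zero, hsum]
end
end

section
/- Let A ≥ 0 and H satisfy Hypothesis 1 with H strictly positive (H ≥ cI > 0), and let B = A^{1/2} H A^{1/2} be the associated self-adjoint operator. Then B ≥ 0 and dom(|B|^{1/2}) = dom(A^{1/2}). -/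
noncomputable section

open scoped ComplexOrder

variable {H : Type*} [NormedAddCommGroup H] [InnerProductSpace ℂ H] [CompleteSpace H]

open Filter Topology

/-- Transfer of the Cauchy property along a norm bound on differences. -/
private lemma cauchy_transfer {E F : Type*} [NormedAddCommGroup E] [NormedAddCommGroup F]
    {f : ℕ → E} {g : ℕ → F} (K : ℝ)
    (h : ∀ m n, ‖f m - f n‖ ≤ K * ‖g m - g n‖) (hg : CauchySeq g) : CauchySeq f := by
  set K' : ℝ := max K 1 with hK'
  have hK'pos : 0 < K' := lt_of_lt_of_le one_pos (le_max_right _ _)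
  have h' : ∀ m n, ‖f m - f n‖ ≤ K' * ‖g m - g n‖ := fun m n =>
    (h m n).trans (mul_le_mul_of_nonneg_right (le_max_left _ _) (norm_nonneg _))
  rw [Metric.cauchySeq_iff] at hg ⊢
  intro ε hε
  obtain ⟨N, hN⟩ := hg (ε / K') (by positivity)
  refine ⟨N, fun m hm n hn => ?_⟩
  have := hN m hm n hn
  rw [dist_eq_norm] at this ⊢
  calc ‖f m - f n‖ ≤ K' * ‖g m - g n‖ := h' m n
    _ < K' * (ε / K') := by
        exact mul_lt_mul_of_pos_left this hK'pos
    _ = ε := by field_simp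

/-- If a sequence in the domain of a self-adjoint partial map converges and its images
converge, the limit belongs to the domain. -/
private lemma mem_of_seqLimit (T : H →ₗ.[ℂ] H) (hT : PMapSelfAdj T)
    (x : ℕ → T.domain) (u w : H)
    (hxu : Tendsto (fun n => ((x n : H))) atTop (𝓝 u))
    (hTx : Tendsto (fun n => T (x n)) atTop (𝓝 w)) :
    u ∈ T.domain := by
  refine hT.2 u w fun v => ?_
  have h1 : Tendsto (fun n => (inner ℂ (T v) ((x n : H)) : ℂ)) atTop (𝓝 (inner ℂ (T v) u)) :=
    tendsto_const_nhds.inner hxu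
  have h3 : Tendsto (fun n => (inner ℂ (v : H) (T (x n)) : ℂ)) atTop
      (𝓝 (inner ℂ (v : H) w)) := tendsto_const_nhds.inner hTx
  exact tendsto_nhds_unique (h1.congr fun n => hT.1 v (x n)) h3

set_option maxHeartbeats 1000000 in
set_option synthInstance.maxHeartbeats 200000 in
/-- Key approximation lemma: if the "range of `B + 1`" is dense (hypothesis `hdense`) and
`C` satisfies `⟪C w, C x⟫ = ⟪w, β x⟫` for `x` in the submodule `D`, then every `u` in the
domain of `C` can be approximated by a sequence in `D` whose `C`-images form a Cauchy
sequence. -/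
private lemma pmap_approx (C : H →ₗ.[ℂ] H) (D : Submodule ℂ H) (hD : D ≤ C.domain)
    (β : D → H)
    (hdense : ∀ v : H, (∀ x : D, (inner ℂ v (x : H) : ℂ) + inner ℂ v (β x) = 0) → v = 0)
    (hCC : ∀ (w : C.domain) (x : D),
      (inner ℂ (C w) (C ⟨(x : H), hD x.2⟩) : ℂ) = inner ℂ (w : H) (β x))
    (u : C.domain) :
    ∃ x : ℕ → D, Tendsto (fun n => ((x n : H))) atTop (𝓝 (u : H)) ∧
      CauchySeq (fun n => C ⟨(x n : H), hD (x n).2⟩) := by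
  classical
  let E := WithLp 2 (H × H)
  let e : E ≃ₗ[ℂ] H × H := WithLp.linearEquiv 2 ℂ (H × H)
  let g : D →ₗ[ℂ] E :=
    e.symm.toLinearMap ∘ₗ LinearMap.prod D.subtype (C.toFun ∘ₗ Submodule.inclusion hD)
  have hg : ∀ x : D, g x = e.symm ((x : H), C ⟨(x : H), hD x.2⟩) := fun x => rfl
  let V : Submodule ℂ E := LinearMap.range g
  let K : Submodule ℂ E := V.topologicalClosure
  haveI : CompleteSpace K := IsClosed.completeSpace_coe (hs := V.isClosed_topologicalClosure)
  let v₀ : E := e.symm ((u : H), C u)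
  let p : E := (K.orthogonalProjectionOnto v₀ : E)
  have hperp : v₀ - p ∈ Vᗮ :=
    Submodule.orthogonal_le V.le_topologicalClosure
      (Submodule.sub_starProjection_mem_orthogonal (K := K) v₀)
  -- a sequence in `D` whose images under `g` tend to `p`
  have hpK : p ∈ closure (V : Set E) := by
    have : p ∈ K := (K.orthogonalProjectionOnto v₀).2
    rwa [← Submodule.topologicalClosure_coe]
  obtain ⟨y, hyV, hyp⟩ := mem_closure_iff_seq_limit.mp hpK
  choose x hx using fun n => (LinearMap.mem_range).mp (hyV n)
  -- component-wise convergence (the topology on `E` is the product topology)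
  have hfst : Tendsto (fun n => ((x n : H))) atTop (𝓝 p.fst) := by
    have := ((WithLp.continuous_fst ..).tendsto p).comp hyp
    refine this.congr fun n => ?_
    show (y n).fst = _
    rw [← hx n, hg]
    exact rfl
  have hsnd : Tendsto (fun n => C ⟨(x n : H), hD (x n).2⟩) atTop (𝓝 p.snd) := by
    have := ((WithLp.continuous_snd ..).tendsto p).comp hyp
    refine this.congr fun n => ?_
    show (y n).snd = _
    rw [← hx n, hg]
    exact rfl
  -- the first component of `p` is `u`
  have hup : (u : H) = p.fst := by
    have key : ∀ z : D, (inner ℂ ((u : H) - p.fst) (z : H) : ℂ)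
        + inner ℂ ((u : H) - p.fst) (β z) = 0 := by
      intro z
      have h0 : (inner ℂ (g z) (v₀ - p) : ℂ) = 0 := hperp (g z) (LinearMap.mem_range_self g z)
      have hexp : (inner ℂ (g z) (v₀ - p) : ℂ)
          = inner ℂ ((z : H)) ((u : H) - p.fst)
            + inner ℂ (C ⟨(z : H), hD z.2⟩) (C u - p.snd) := by
        rw [WithLp.prod_inner_apply]
        have c1 : (WithLp.ofLp (g z)).1 = ((z : H)) := rfl
        have c2 : (WithLp.ofLp (g z)).2 = C ⟨(z : H), hD z.2⟩ := rfl
        have c3 : (WithLp.ofLp (v₀ - p)).1 = (u : H) - p.fst := rfl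
        have c4 : (WithLp.ofLp (v₀ - p)).2 = C u - p.snd := rfl
        rw [c1, c2, c3, c4]
      have h1 : (inner ℂ (C ⟨(z : H), hD z.2⟩) (C u) : ℂ) = inner ℂ (β z) (u : H) := by
        rw [← inner_conj_symm, hCC u z, inner_conj_symm]
      have h2 : (inner ℂ (C ⟨(z : H), hD z.2⟩) (p.snd) : ℂ) = inner ℂ (β z) p.fst := by
        have ha : Tendsto (fun n =>
            (inner ℂ (C ⟨(z : H), hD z.2⟩) (C ⟨(x n : H), hD (x n).2⟩) : ℂ)) atTop
            (𝓝 (inner ℂ (C ⟨(z : H), hD z.2⟩) (p.snd))) := tendsto_const_nhds.inner hsnd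
        have heq : ∀ n, (inner ℂ (C ⟨(z : H), hD z.2⟩) (C ⟨(x n : H), hD (x n).2⟩) : ℂ)
            = inner ℂ (β z) ((x n : H)) := by
          intro n
          rw [← inner_conj_symm, hCC ⟨(x n : H), hD (x n).2⟩ z, inner_conj_symm]
        have hb : Tendsto (fun n =>
            (inner ℂ (C ⟨(z : H), hD z.2⟩) (C ⟨(x n : H), hD (x n).2⟩) : ℂ)) atTop
            (𝓝 (inner ℂ (β z) p.fst)) :=
          ((tendsto_const_nhds.inner hfst).congr fun n => (heq n).symm)
        exact tendsto_nhds_unique ha hb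
      have h3 : (inner ℂ (g z) (v₀ - p) : ℂ)
          = inner ℂ ((z : H)) ((u : H) - p.fst) + inner ℂ (β z) ((u : H) - p.fst) := by
        have h5 : (inner ℂ (C ⟨(z : H), hD z.2⟩) (C u - p.snd) : ℂ)
            = inner ℂ (β z) ((u : H) - p.fst) := by
          rw [inner_sub_right, inner_sub_right, h1, h2]
        rw [hexp, h5]
      have h4 : (inner ℂ ((z : H)) ((u : H) - p.fst) : ℂ)
          + inner ℂ (β z) ((u : H) - p.fst) = 0 := by rw [← h3, h0]
      have := congrArg (starRingEnd ℂ) h4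
      simpa [inner_conj_symm, map_add] using this
    exact sub_eq_zero.mp (hdense ((u : H) - p.fst) key)
  refine ⟨x, ?_, hsnd.cauchySeq⟩
  rwa [← hup] at hfst

private lemma cre (w : H) : (inner ℂ w w : ℂ).re = ‖w‖ ^ 2 := by
  rw [← RCLike.re_to_complex, inner_self_eq_norm_sq]

/-- Let `A ≥ 0` be self-adjoint (with non-negative self-adjoint square root
`sqrtA`) and let `Hb` satisfy Hypothesis 1 and be strictly positive (`Hb ≥ c > 0`).  Let
`B = A^{1/2} Hb A^{1/2}` on its natural domain (self-adjoint by the First Representation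
Theorem), with non-negative self-adjoint square root `sqrtB` (note `|B| = B` since `B ≥ 0`).
Then `B ≥ 0` and `dom |B|^{1/2} = dom A^{1/2}`. -/
theorem stmt19 (A : H →ₗ.[ℂ] H) (hAsa : PMapSelfAdj A) (hA0 : PMapNonneg A)
    (sqrtA : H →ₗ.[ℂ] H) (hsqrtA : PMapIsSqrt sqrtA A)
    (Hb : H →L[ℂ] H) (hHbsa : IsSelfAdjoint Hb)
    (c : ℝ) (hc : 0 < c)
    (hHbpos : ∀ x : H, c * ‖x‖ ^ 2 ≤ (inner ℂ x (Hb x) : ℂ).re)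
    (J : H →L[ℂ] H) (hJsa : IsSelfAdjoint J) (hJ2 : J * J = 1)
    (hJA : ∀ x : A.domain, ∃ h : J (x : H) ∈ A.domain, A ⟨J (x : H), h⟩ = J (A x))
    (α : ℝ) (hα : α ∈ Set.Ioc (0 : ℝ) 1)
    (P : H →L[ℂ] H) (hP : P = (2⁻¹ : ℂ) • (1 + J))
    (hpos : ∀ x : H, α * ‖P x‖ ^ 2 ≤ (inner ℂ (P x) (Hb (P x)) : ℂ).re)
    (hneg : ∀ x : H, (inner ℂ ((1 - P) x) (Hb ((1 - P) x)) : ℂ).re ≤ -α * ‖(1 - P) x‖ ^ 2)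
    (B : H →ₗ.[ℂ] H) (hBsa : PMapSelfAdj B)
    (hBdom : ∀ z : H, z ∈ B.domain ↔
      ∃ h : z ∈ sqrtA.domain, Hb (sqrtA ⟨z, h⟩) ∈ sqrtA.domain)
    (hBval : ∀ (z : B.domain) (h : (z : H) ∈ sqrtA.domain)
      (h2 : Hb (sqrtA ⟨(z : H), h⟩) ∈ sqrtA.domain),
      B z = sqrtA ⟨Hb (sqrtA ⟨(z : H), h⟩), h2⟩)
    (sqrtB : H →ₗ.[ℂ] H) (hsqrtB : PMapIsSqrt sqrtB B) :
    PMapNonneg B ∧ sqrtB.domain = sqrtA.domain := by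
  classical
  -- notation
  have hTd : B.domain ≤ sqrtA.domain := fun z hz => ((hBdom z).mp hz).choose
  have hRd : B.domain ≤ sqrtB.domain := fun z hz => (hsqrtB.2.2.1 ⟨z, hz⟩).choose
  -- the key identity ⟪z, B z⟫ = ⟪A^{1/2} z, Hb A^{1/2} z⟫ for z ∈ dom B
  have keyid : ∀ z : B.domain, (inner ℂ ((z : H)) (B z) : ℂ)
      = inner ℂ (sqrtA ⟨(z : H), hTd z.2⟩) (Hb (sqrtA ⟨(z : H), hTd z.2⟩)) := by
    intro z
    obtain ⟨h, h2⟩ := (hBdom (z : H)).mp z.2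
    have hv := hBval z h h2
    have hsymm := hsqrtA.1.1 ⟨(z : H), h⟩ ⟨Hb (sqrtA ⟨(z : H), h⟩), h2⟩
    rw [hv]
    exact hsymm.symm
  -- B is non-negative
  have hBnn : PMapNonneg B := by
    intro z
    rw [keyid z]
    have := hHbpos (sqrtA ⟨(z : H), hTd z.2⟩)
    nlinarith [norm_nonneg (sqrtA ⟨(z : H), hTd z.2⟩), sq_nonneg ‖sqrtA ⟨(z : H), hTd z.2⟩‖]
  refine ⟨hBnn, ?_⟩
  -- the bounded square root S of Hb
  have h0 : (0 : H →L[ℂ] H) ≤ Hb := by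
    rw [ContinuousLinearMap.nonneg_iff_isPositive]
    refine ⟨hHbsa.isSymmetric, fun x => ?_⟩
    have h1 := hHbpos x
    have h2 : (inner ℂ (Hb x) x : ℂ).re = (inner ℂ x (Hb x) : ℂ).re := by
      rw [← inner_conj_symm x (Hb x), Complex.conj_re]
    have : (0:ℝ) ≤ c * ‖x‖ ^ 2 := by positivity
    have h3 : (0:ℝ) ≤ (inner ℂ (Hb x) x : ℂ).re := by
      rw [h2]; linarith
    simpa [ContinuousLinearMap.reApplyInnerSelf, RCLike.re_to_complex] using h3
  set S : H →L[ℂ] H := CFC.sqrt Hb with hSdef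
  have hSnn : (0 : H →L[ℂ] H) ≤ S := CFC.sqrt_nonneg Hb
  have hSsa : IsSelfAdjoint S := hSnn.isSelfAdjoint
  have hSS : S * S = Hb := CFC.sqrt_mul_sqrt_self Hb h0
  have hSinner : ∀ a b : H, (inner ℂ (S a) (S b) : ℂ) = inner ℂ a (Hb b) := by
    intro a b
    have h7 := ContinuousLinearMap.adjoint_inner_left S (S b) a
    rw [hSsa.adjoint_eq] at h7
    rw [h7, ← ContinuousLinearMap.mul_apply, hSS]
  have hSnorm : ∀ a : H, ‖S a‖ ^ 2 = (inner ℂ a (Hb a) : ℂ).re := by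
    intro a
    rw [← hSinner a a, cre]
  -- density of the range of B + 1
  have hdense : ∀ v : H, (∀ x : B.domain, (inner ℂ v ((x : H)) : ℂ) + inner ℂ v (B x) = 0)
      → v = 0 := by
    intro v hv
    have hvdom : v ∈ B.domain := by
      refine hBsa.2 v (-v) fun x => ?_
      have := hv x
      have h1 : (inner ℂ ((x : H)) v : ℂ) + inner ℂ (B x) v = 0 := by
        have := congrArg (starRingEnd ℂ) (hv x)
        simpa [inner_conj_symm, map_add] using this
      rw [inner_neg_right]
      linear_combination h1
    have h2 := hv ⟨v, hvdom⟩
    have h3 : ‖v‖ ^ 2 + (inner ℂ v (B ⟨v, hvdom⟩) : ℂ).re = 0 := by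
      have := congrArg Complex.re h2
      rw [Complex.add_re, cre] at this
      exact this
    have h4 : (0:ℝ) ≤ (inner ℂ v (B ⟨v, hvdom⟩) : ℂ).re := hBnn ⟨v, hvdom⟩
    have h5 : ‖v‖ ^ 2 = 0 := by nlinarith [sq_nonneg ‖v‖]
    have h6 : ‖v‖ = 0 := (pow_eq_zero_iff (n := 2) (by norm_num)).mp h5
    exact norm_eq_zero.mp h6
  -- norms of sqrtB and S ∘ sqrtA agree on dom B
  have hR2 : ∀ z : B.domain, ‖sqrtB ⟨(z : H), hRd z.2⟩‖ ^ 2 = (inner ℂ ((z : H)) (B z) : ℂ).re := by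
    intro z
    obtain ⟨hx, hRx, hBx⟩ := hsqrtB.2.2.1 z
    have hsymm := hsqrtB.1.1 ⟨(z : H), hx⟩ ⟨sqrtB ⟨(z : H), hx⟩, hRx⟩
    have : (inner ℂ (sqrtB ⟨(z : H), hx⟩) (sqrtB ⟨(z : H), hx⟩) : ℂ)
        = inner ℂ ((z : H)) (B z) := by rw [hsymm, ← hBx]
    have h6 : ‖sqrtB ⟨(z : H), hx⟩‖ ^ 2 = (inner ℂ ((z : H)) (B z) : ℂ).re := by
      rw [← this, cre]
    exact h6
  have hST2 : ∀ z : B.domain, ‖S (sqrtA ⟨(z : H), hTd z.2⟩)‖ ^ 2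
      = (inner ℂ ((z : H)) (B z) : ℂ).re := by
    intro z
    rw [hSnorm, ← keyid z]
  -- the auxiliary partial map  z ↦ S (sqrtA z)
  set Cst : H →ₗ.[ℂ] H :=
    ⟨sqrtA.domain, (S : H →ₗ[ℂ] H).comp sqrtA.toFun⟩ with hCstdef
  have hCstval : ∀ w : sqrtA.domain, Cst w = S (sqrtA w) := fun w => rfl
  -- ⟪C w, C x⟫ = ⟪w, B x⟫ for the two candidates C
  have hCC₁ : ∀ (w : Cst.domain) (x : B.domain),
      (inner ℂ (Cst w) (Cst ⟨(x : H), hTd x.2⟩) : ℂ) = inner ℂ ((w : H)) (B x) := by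
    intro w x
    obtain ⟨h, h2⟩ := (hBdom (x : H)).mp x.2
    have hv := hBval x h h2
    rw [hCstval, hCstval, hSinner]
    have hsymm := hsqrtA.1.1 w ⟨Hb (sqrtA ⟨(x : H), h⟩), h2⟩
    rw [hv]
    exact hsymm
  have hCC₂ : ∀ (w : sqrtB.domain) (x : B.domain),
      (inner ℂ (sqrtB w) (sqrtB ⟨(x : H), hRd x.2⟩) : ℂ) = inner ℂ ((w : H)) (B x) := by
    intro w x
    obtain ⟨hx, hRx, hBx⟩ := hsqrtB.2.2.1 x
    have hsymm := hsqrtB.1.1 w ⟨sqrtB ⟨(x : H), hx⟩, hRx⟩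
    rw [hBx]
    exact hsymm
  -- now prove the two inclusions
  apply le_antisymm
  · -- dom sqrtB ≤ dom sqrtA
    intro u hu
    obtain ⟨x, hxu, hcauchy⟩ := pmap_approx sqrtB B.domain hRd (fun x => B x) hdense hCC₂
      ⟨u, hu⟩
    -- sqrtA-images are Cauchy
    have hTc : CauchySeq (fun n => sqrtA ⟨(x n : H), hTd (x n).2⟩) := by
      refine cauchy_transfer (Real.sqrt c⁻¹) (fun m n => ?_) hcauchy
      rw [← LinearPMap.map_sub, ← LinearPMap.map_sub]
      have hz : ((x m : H)) - ((x n : H)) ∈ B.domain := sub_mem (x m).2 (x n).2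
      have e1 : (⟨(x m : H), hTd (x m).2⟩ - ⟨(x n : H), hTd (x n).2⟩ : sqrtA.domain)
          = ⟨(x m : H) - (x n : H), hTd hz⟩ := rfl
      have e2 : (⟨(x m : H), hRd (x m).2⟩ - ⟨(x n : H), hRd (x n).2⟩ : sqrtB.domain)
          = ⟨(x m : H) - (x n : H), hRd hz⟩ := rfl
      rw [e1, e2]
      set z : B.domain := ⟨(x m : H) - (x n : H), hz⟩ with hzdef
      have b1 := hR2 z
      have b2 := hHbpos (sqrtA ⟨(z : H), hTd z.2⟩)
      have b3 := keyid z
      have b4 : c * ‖sqrtA ⟨(z : H), hTd z.2⟩‖ ^ 2 ≤ ‖sqrtB ⟨(z : H), hRd z.2⟩‖ ^ 2 := by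
        rw [b1]
        calc c * ‖sqrtA ⟨(z : H), hTd z.2⟩‖ ^ 2
            ≤ (inner ℂ (sqrtA ⟨(z : H), hTd z.2⟩) (Hb (sqrtA ⟨(z : H), hTd z.2⟩)) : ℂ).re := b2
          _ = (inner ℂ ((z : H)) (B z) : ℂ).re := by rw [b3]
      have b5 : ‖sqrtA ⟨(z : H), hTd z.2⟩‖ ^ 2 ≤ c⁻¹ * ‖sqrtB ⟨(z : H), hRd z.2⟩‖ ^ 2 := by
        rw [le_inv_mul_iff₀ hc] at *
        · linarith
      calc ‖sqrtA ⟨(z : H), hTd z.2⟩‖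
          = Real.sqrt (‖sqrtA ⟨(z : H), hTd z.2⟩‖ ^ 2) := by
            rw [Real.sqrt_sq (norm_nonneg _)]
        _ ≤ Real.sqrt (c⁻¹ * ‖sqrtB ⟨(z : H), hRd z.2⟩‖ ^ 2) := Real.sqrt_le_sqrt b5
        _ = Real.sqrt c⁻¹ * ‖sqrtB ⟨(z : H), hRd z.2⟩‖ := by
            rw [Real.sqrt_mul (by positivity), Real.sqrt_sq (norm_nonneg _)]
    obtain ⟨w, hw⟩ := cauchySeq_tendsto_of_complete hTc
    exact mem_of_seqLimit sqrtA hsqrtA.1 (fun n => ⟨(x n : H), hTd (x n).2⟩) u w hxu hw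
  · -- dom sqrtA ≤ dom sqrtB
    intro u hu
    obtain ⟨x, hxu, hcauchy⟩ := pmap_approx Cst B.domain hTd (fun x => B x) hdense hCC₁
      ⟨u, hu⟩
    have hRc : CauchySeq (fun n => sqrtB ⟨(x n : H), hRd (x n).2⟩) := by
      refine cauchy_transfer 1 (fun m n => ?_) hcauchy
      rw [← LinearPMap.map_sub, ← LinearPMap.map_sub, one_mul]
      have hz : ((x m : H)) - ((x n : H)) ∈ B.domain := sub_mem (x m).2 (x n).2
      have e1 : (⟨(x m : H), hTd (x m).2⟩ - ⟨(x n : H), hTd (x n).2⟩ : Cst.domain)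
          = ⟨(x m : H) - (x n : H), hTd hz⟩ := rfl
      have e2 : (⟨(x m : H), hRd (x m).2⟩ - ⟨(x n : H), hRd (x n).2⟩ : sqrtB.domain)
          = ⟨(x m : H) - (x n : H), hRd hz⟩ := rfl
      rw [e1, e2]
      set z : B.domain := ⟨(x m : H) - (x n : H), hz⟩ with hzdef
      have b1 := hR2 z
      have b2 := hST2 z
      have : ‖sqrtB ⟨(z : H), hRd z.2⟩‖ ^ 2 = ‖Cst ⟨(z : H), hTd z.2⟩‖ ^ 2 := by
        rw [b1, hCstval, b2]
      have hnn : (0:ℝ) ≤ ‖Cst ⟨(z : H), hTd z.2⟩‖ := norm_nonneg _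
      nlinarith [norm_nonneg (sqrtB ⟨(z : H), hRd z.2⟩)]
    obtain ⟨w, hw⟩ := cauchySeq_tendsto_of_complete hRc
    exact mem_of_seqLimit sqrtB hsqrtB.1 (fun n => ⟨(x n : H), hRd (x n).2⟩) u w hxu hw
end
end
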